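/- arXiv:2112.01481 — 6 statements merged into one kernel-verified Lean document; each statement's English description precedes it below -/
import Mathlib

section
/- Let $k$ be a field and $S = k[x,y,z,w]$. For integers $n_1, n_2 \ge 2$, let $I = (x,y)^{n_1} + (z,w)^{n_2} + (xz - yw)$. Then $\dim_k S/I = \frac{n_1 n_2 (n_1 + n_2)}{2}$. -/
open MvPolynomial Finsupp Pointwise

noncomputable section Aux7

/-! ### Combinatorics -/

def tria (n : ℕ) : Finset (ℕ × ℕ) :=
  (Finset.range n ×ˢ Finset.range n).filter fun p => p.1 + p.2 < n

lemma mem_tria {n : ℕ} {p : ℕ × ℕ} : p ∈ tria n ↔ p.1 + p.2 < n := by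
  simp only [tria, Finset.mem_filter, Finset.mem_product, Finset.mem_range]
  omega

lemma gauss_sum : ∀ n : ℕ, 2 * (∑ a ∈ Finset.range n, (n - a)) = n * (n + 1) := by
  intro n
  induction n with
  | zero => simp
  | succ n ih =>
    rw [Finset.sum_range_succ]
    have h1 : (∑ a ∈ Finset.range n, (n + 1 - a)) = (∑ a ∈ Finset.range n, (n - a)) + n := by
      have : ∀ a ∈ Finset.range n, n + 1 - a = (n - a) + 1 := by
        intro a ha; rw [Finset.mem_range] at ha; omega
      rw [Finset.sum_congr rfl this, Finset.sum_add_distrib, Finset.sum_const,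
        Finset.card_range, smul_eq_mul, mul_one]
    rw [h1]
    have h2 : 2 * ((∑ a ∈ Finset.range n, (n - a)) + n + (n + 1 - n))
        = 2 * (∑ a ∈ Finset.range n, (n - a)) + 2 * n + 2 * (n + 1 - n) := by ring
    rw [h2, ih]
    have : n + 1 - n = 1 := by omega
    rw [this]; ring

lemma tria_eq (n : ℕ) :
    tria n = (Finset.range n).biUnion fun a => {a} ×ˢ Finset.range (n - a) := by
  ext ⟨a, b⟩
  simp only [mem_tria, Finset.mem_biUnion, Finset.mem_range, Finset.mem_product,
    Finset.mem_singleton]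
  constructor
  · intro h; exact ⟨a, by omega, rfl, by omega⟩
  · rintro ⟨x, hx, rfl, hb⟩; omega

lemma card_tria (n : ℕ) : 2 * (tria n).card = n * (n + 1) := by
  rw [tria_eq, Finset.card_biUnion]
  · have : ∀ a ∈ Finset.range n, ({a} ×ˢ Finset.range (n - a)).card = n - a := by
      intro a _; rw [Finset.card_product, Finset.card_singleton, Finset.card_range, one_mul]
    rw [Finset.sum_congr rfl this, gauss_sum]
  · intro x _ y _ hxy
    rw [Function.onFun, Finset.disjoint_left]
    rintro ⟨a, b⟩ ha hb
    simp only [Finset.mem_product, Finset.mem_singleton] at ha hb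
    exact hxy (ha.1 ▸ hb.1 ▸ rfl)

def bFst (n1 : ℕ) : Finset (ℕ × ℕ) := (tria (n1 - 1)).image fun p => (p.1 + 1, p.2)

lemma mem_bFst {n1 : ℕ} {p : ℕ × ℕ} : p ∈ bFst n1 ↔ 1 ≤ p.1 ∧ p.1 + p.2 < n1 := by
  obtain ⟨a, b⟩ := p
  simp only [bFst, Finset.mem_image, mem_tria, Prod.mk.injEq, Prod.exists]
  constructor
  · rintro ⟨x, y, hxy, rfl, rfl⟩; omega
  · rintro ⟨ha, hab⟩; exact ⟨a - 1, b, by omega, by omega, rfl⟩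

lemma card_bFst (n1 : ℕ) : 2 * (bFst n1).card = (n1 - 1) * n1 := by
  have hinj : Set.InjOn (fun p : ℕ × ℕ => (p.1 + 1, p.2)) (tria (n1 - 1)) := by
    rintro ⟨a, b⟩ _ ⟨c, d⟩ _ h
    simp only [Prod.mk.injEq] at h
    exact Prod.ext (by omega) h.2
  rw [bFst, Finset.card_image_of_injOn hinj]
  have := card_tria (n1 - 1)
  rcases Nat.eq_zero_or_pos n1 with h | h
  · subst h; simpa using this
  · have hn : n1 - 1 + 1 = n1 := by omega
    rw [this, hn]

def sSet (n1 n2 : ℕ) : Finset ((ℕ × ℕ) × ℕ × ℕ) :=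
  ((Finset.range n1 ×ˢ Finset.range n1) ×ˢ (Finset.range n2 ×ˢ Finset.range n2)).filter
    fun q => q.1.1 + q.1.2 < n1 ∧ q.2.1 + q.2.2 < n2 ∧ (q.1.1 = 0 ∨ q.2.1 = 0)

lemma mem_sSet {n1 n2 : ℕ} {q : (ℕ × ℕ) × ℕ × ℕ} :
    q ∈ sSet n1 n2 ↔ q.1.1 + q.1.2 < n1 ∧ q.2.1 + q.2.2 < n2 ∧ (q.1.1 = 0 ∨ q.2.1 = 0) := by
  simp only [sSet, Finset.mem_filter, Finset.mem_product, Finset.mem_range]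
  omega

lemma sSet_eq (n1 n2 : ℕ) :
    sSet n1 n2 = (({0} : Finset ℕ) ×ˢ Finset.range n1) ×ˢ tria n2
      ∪ bFst n1 ×ˢ (({0} : Finset ℕ) ×ˢ Finset.range n2) := by
  ext ⟨⟨a, b⟩, c, d⟩
  rw [Finset.mem_union, mem_sSet]
  simp only [Finset.mem_product, Finset.mem_singleton, Finset.mem_range, mem_tria, mem_bFst]
  omega

lemma card_sSet {n1 n2 : ℕ} (h1 : 2 ≤ n1) (h2 : 2 ≤ n2) :
    2 * (sSet n1 n2).card = n1 * n2 * (n1 + n2) := by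
  rw [sSet_eq, Finset.card_union_of_disjoint]
  rotate_left
  · rw [Finset.disjoint_left]
    rintro ⟨⟨a, b⟩, c, d⟩ hA hB
    simp only [Finset.mem_product, Finset.mem_singleton, Finset.mem_range, mem_bFst] at hA hB
    omega
  · simp only [Finset.card_product, Finset.card_singleton, Finset.card_range]
    obtain ⟨m, rfl⟩ : ∃ m, n1 = m + 2 := ⟨n1 - 2, by omega⟩
    obtain ⟨l, rfl⟩ : ∃ l, n2 = l + 2 := ⟨n2 - 2, by omega⟩
    have hTA := card_tria (l + 2)
    have hTB := card_bFst (m + 2)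
    have hm : (m + 2 : ℕ) - 1 = m + 1 := by omega
    rw [hm] at hTB
    have expand : 2 * (1 * (m + 2) * (tria (l + 2)).card + (bFst (m + 2)).card * (1 * (l + 2)))
        = (m + 2) * (2 * (tria (l + 2)).card) + (2 * (bFst (m + 2)).card) * (l + 2) := by ring
    rw [expand, hTA, hTB]; ring

/-! ### Exponent vectors -/

def mk4 (a b c d : ℕ) : Fin 4 →₀ ℕ := Finsupp.equivFunOnFinite.symm ![a,b,c,d]

@[simp] lemma mk4_0 (a b c d : ℕ) : mk4 a b c d 0 = a := rfl
@[simp] lemma mk4_1 (a b c d : ℕ) : mk4 a b c d 1 = b := rfl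
@[simp] lemma mk4_2 (a b c d : ℕ) : mk4 a b c d 2 = c := rfl
@[simp] lemma mk4_3 (a b c d : ℕ) : mk4 a b c d 3 = d := rfl

lemma mk4_congr {a b c d a' b' c' d' : ℕ} (ha : a = a') (hb : b = b') (hc : c = c')
    (hd : d = d') : mk4 a b c d = mk4 a' b' c' d' := by subst ha hb hc hd; rfl

lemma mk4_eta (v : Fin 4 →₀ ℕ) : mk4 (v 0) (v 1) (v 2) (v 3) = v := by
  ext i; fin_cases i <;> rfl

lemma mk4_add (a b c d a' b' c' d' : ℕ) :
    mk4 a b c d + mk4 a' b' c' d' = mk4 (a+a') (b+b') (c+c') (d+d') := by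
  ext i; fin_cases i <;> simp

lemma sing_mk4 (a b c d : ℕ) :
    (Finsupp.single 0 a + Finsupp.single 1 b + Finsupp.single 2 c + Finsupp.single 3 d
      : Fin 4 →₀ ℕ) = mk4 a b c d := by
  ext i; fin_cases i <;> simp [Finsupp.single_apply]

lemma mon_mk4 (k : Type*) [Field k] (a b c d : ℕ) :
    (monomial (mk4 a b c d) (1:k)) = X 0 ^ a * X 1 ^ b * X 2 ^ c * X 3 ^ d := by
  simp only [X_pow_eq_monomial, monomial_mul, one_mul, sing_mk4]

lemma monXZ (k : Type*) [Field k] :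
    (monomial (mk4 1 0 1 0) (1:k)) = X 0 * X 2 := by
  rw [mon_mk4]; simp only [pow_one, pow_zero, mul_one]

lemma monYW (k : Type*) [Field k] :
    (monomial (mk4 0 1 0 1) (1:k)) = X 1 * X 3 := by
  rw [mon_mk4]; simp only [pow_one, pow_zero, mul_one, one_mul]

/-! ### The normal form map -/

def red (v : Fin 4 →₀ ℕ) : Fin 4 →₀ ℕ :=
  mk4 (v 0 - min (v 0) (v 2)) (v 1 + min (v 0) (v 2))
      (v 2 - min (v 0) (v 2)) (v 3 + min (v 0) (v 2))

def theta (k : Type*) [Field k] (n1 n2 : ℕ) (v : Fin 4 →₀ ℕ) : (Fin 4 →₀ ℕ) →₀ k :=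
  if v 0 + v 1 < n1 ∧ v 2 + v 3 < n2 then Finsupp.single (red v) (1:k) else 0

def psi (k : Type*) [Field k] (n1 n2 : ℕ) :
    MvPolynomial (Fin 4) k →ₗ[k] ((Fin 4 →₀ ℕ) →₀ k) :=
  (MvPolynomial.basisMonomials (Fin 4) k).constr k (theta k n1 n2)

lemma psi_monomial (k : Type*) [Field k] (n1 n2 : ℕ) (v : Fin 4 →₀ ℕ) (r : k) :
    psi k n1 n2 (monomial v r) = r • theta k n1 n2 v := by
  have h1 : monomial v r = r • monomial v (1:k) := by
    rw [MvPolynomial.smul_monomial, smul_eq_mul, mul_one]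
  rw [h1, map_smul]
  congr 1
  have := Module.Basis.constr_basis (MvPolynomial.basisMonomials (Fin 4) k) k (theta k n1 n2) v
  rwa [coe_basisMonomials] at this

lemma theta_key (k : Type*) [Field k] (n1 n2 : ℕ) (u : Fin 4 →₀ ℕ) :
    theta k n1 n2 (u + mk4 1 0 1 0) = theta k n1 n2 (u + mk4 0 1 0 1) := by
  unfold theta
  have e0 : (u + mk4 1 0 1 0) 0 = u 0 + 1 := by simp
  have e1 : (u + mk4 1 0 1 0) 1 = u 1 := by simp
  have e2 : (u + mk4 1 0 1 0) 2 = u 2 + 1 := by simp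
  have e3 : (u + mk4 1 0 1 0) 3 = u 3 := by simp
  have f0 : (u + mk4 0 1 0 1) 0 = u 0 := by simp
  have f1 : (u + mk4 0 1 0 1) 1 = u 1 + 1 := by simp
  have f2 : (u + mk4 0 1 0 1) 2 = u 2 := by simp
  have f3 : (u + mk4 0 1 0 1) 3 = u 3 + 1 := by simp
  rw [e0, e1, e2, e3, f0, f1, f2, f3]
  have hc : (u 0 + 1 + u 1 < n1 ∧ u 2 + 1 + u 3 < n2) ↔
      (u 0 + (u 1 + 1) < n1 ∧ u 2 + (u 3 + 1) < n2) := by omega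
  by_cases h : u 0 + 1 + u 1 < n1 ∧ u 2 + 1 + u 3 < n2
  · rw [if_pos h, if_pos (hc.mp h)]
    congr 1
    unfold red
    rw [e0, e1, e2, e3, f0, f1, f2, f3]
    have hmin : min (u 0 + 1) (u 2 + 1) = min (u 0) (u 2) + 1 := by omega
    rw [hmin]
    congr 1 <;> omega
  · rw [if_neg h, if_neg (fun hh => h (hc.mpr hh))]

/-! ### Vanishing on ideals -/

def powSet {R : Type*} [CommRing R] (x y : R) (n : ℕ) : Set R :=
  {p | ∃ a b, a + b = n ∧ p = x ^ a * y ^ b}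

lemma pow_le_span {R : Type*} [CommRing R] (x y : R) (n : ℕ) :
    (Ideal.span {x, y}) ^ n ≤ Ideal.span (powSet x y n) := by
  induction n with
  | zero =>
    have : (1:R) ∈ Ideal.span (powSet x y 0) :=
      Ideal.subset_span ⟨0, 0, rfl, by simp⟩
    rw [pow_zero, Ideal.one_eq_top, (Ideal.eq_top_iff_one _).mpr this]
  | succ n ih =>
    rw [pow_succ]
    calc (Ideal.span {x, y}) ^ n * Ideal.span {x, y}
        ≤ Ideal.span (powSet x y n) * Ideal.span {x, y} := Ideal.mul_mono_left ih
      _ = Ideal.span (powSet x y n * ({x, y} : Set R)) :=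
          Ideal.span_mul_span' (powSet x y n) ({x, y} : Set R)
      _ ≤ Ideal.span (powSet x y (n + 1)) := by
          rw [Ideal.span_le]
          rintro p hp
          rw [Set.mem_mul] at hp
          obtain ⟨g, ⟨a, b, hab, rfl⟩, t, ht, rfl⟩ := hp
          rcases ht with rfl | rfl
          · exact Ideal.subset_span ⟨a + 1, b, by omega, by ring⟩
          · exact Ideal.subset_span ⟨a, b + 1, by omega, by ring⟩

lemma psi_vanish_span {k : Type*} [Field k] {M : Type*} [AddCommGroup M] [Module k M]
    (ψ : MvPolynomial (Fin 4) k →ₗ[k] M) (G : Set (MvPolynomial (Fin 4) k))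
    (hG : ∀ g ∈ G, ∀ u r, ψ (monomial u r * g) = 0) :
    ∀ p ∈ Ideal.span G, ψ p = 0 := by
  have key : ∀ p ∈ Ideal.span G, ∀ q, ψ (q * p) = 0 := by
    intro p hp
    refine Submodule.span_induction ?_ ?_ ?_ ?_ hp
    · intro g hg q
      induction q using MvPolynomial.induction_on' with
      | monomial u r => exact hG g hg u r
      | add p1 p2 h1 h2 => rw [add_mul, map_add, h1, h2, add_zero]
    · intro q; rw [mul_zero, map_zero]
    · intro p1 p2 _ _ h1 h2 q; rw [mul_add, map_add, h1, h2, add_zero]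
    · intro s p' _ h q
      rw [smul_eq_mul, ← mul_assoc]; exact h _
  intro p hp
  simpa using key p hp 1

lemma psi_vanish (k : Type*) [Field k] (n1 n2 : ℕ) :
    ∀ p ∈ (Ideal.span {(X 0 : MvPolynomial (Fin 4) k), X 1}) ^ n1
        + (Ideal.span {(X 2 : MvPolynomial (Fin 4) k), X 3}) ^ n2
        + Ideal.span {(X 0 : MvPolynomial (Fin 4) k) * X 2 - X 1 * X 3},
      psi k n1 n2 p = 0 := by
  have hA : ∀ p ∈ (Ideal.span {(X 0 : MvPolynomial (Fin 4) k), X 1}) ^ n1,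
      psi k n1 n2 p = 0 := by
    intro p hp
    refine psi_vanish_span _ (powSet (X 0) (X 1) n1) ?_ p (pow_le_span _ _ _ hp)
    rintro g ⟨a, b, hab, rfl⟩ u r
    have hmon : (X 0 : MvPolynomial (Fin 4) k) ^ a * X 1 ^ b = monomial (mk4 a b 0 0) 1 := by
      rw [mon_mk4]; simp
    rw [hmon, monomial_mul, psi_monomial]
    have hcond : ¬((u + mk4 a b 0 0) 0 + (u + mk4 a b 0 0) 1 < n1
        ∧ (u + mk4 a b 0 0) 2 + (u + mk4 a b 0 0) 3 < n2) := by
      simp only [Finsupp.add_apply, mk4_0, mk4_1, mk4_2, mk4_3]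
      omega
    unfold theta
    rw [if_neg hcond, smul_zero]
  have hB : ∀ p ∈ (Ideal.span {(X 2 : MvPolynomial (Fin 4) k), X 3}) ^ n2,
      psi k n1 n2 p = 0 := by
    intro p hp
    refine psi_vanish_span _ (powSet (X 2) (X 3) n2) ?_ p (pow_le_span _ _ _ hp)
    rintro g ⟨a, b, hab, rfl⟩ u r
    have hmon : (X 2 : MvPolynomial (Fin 4) k) ^ a * X 3 ^ b = monomial (mk4 0 0 a b) 1 := by
      rw [mon_mk4]; simp
    rw [hmon, monomial_mul, psi_monomial]
    have hcond : ¬((u + mk4 0 0 a b) 0 + (u + mk4 0 0 a b) 1 < n1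
        ∧ (u + mk4 0 0 a b) 2 + (u + mk4 0 0 a b) 3 < n2) := by
      simp only [Finsupp.add_apply, mk4_0, mk4_1, mk4_2, mk4_3]
      omega
    unfold theta
    rw [if_neg hcond, smul_zero]
  have hC : ∀ p ∈ Ideal.span {(X 0 : MvPolynomial (Fin 4) k) * X 2 - X 1 * X 3},
      psi k n1 n2 p = 0 := by
    refine psi_vanish_span _ _ ?_
    rintro g hg u r
    rw [Set.mem_singleton_iff] at hg
    subst hg
    rw [mul_sub, ← monXZ, ← monYW, monomial_mul, monomial_mul, map_sub,
      psi_monomial, psi_monomial, theta_key, sub_self]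
  intro p hp
  rw [Submodule.add_eq_sup, Submodule.add_eq_sup] at hp
  obtain ⟨ab, hab, c, hc, rfl⟩ := Submodule.mem_sup.mp hp
  obtain ⟨a, ha, b, hb, rfl⟩ := Submodule.mem_sup.mp hab
  rw [map_add, map_add, hA a ha, hB b hb, hC c hc, add_zero, add_zero]

/-! ### The standard monomials -/

def tFin (n1 n2 : ℕ) : Finset (Fin 4 →₀ ℕ) :=
  (sSet n1 n2).image fun q => mk4 q.1.1 q.1.2 q.2.1 q.2.2

lemma mem_tFin {n1 n2 : ℕ} {v : Fin 4 →₀ ℕ} :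
    v ∈ tFin n1 n2 ↔ v 0 + v 1 < n1 ∧ v 2 + v 3 < n2 ∧ (v 0 = 0 ∨ v 2 = 0) := by
  constructor
  · intro h
    rw [tFin, Finset.mem_image] at h
    obtain ⟨q, hq, rfl⟩ := h
    rw [mem_sSet] at hq
    simpa using hq
  · intro h
    rw [tFin, Finset.mem_image]
    exact ⟨((v 0, v 1), (v 2, v 3)), mem_sSet.mpr (by simpa using h), mk4_eta v⟩

lemma card_tFin (n1 n2 : ℕ) : (tFin n1 n2).card = (sSet n1 n2).card := by
  rw [tFin]
  apply Finset.card_image_of_injOn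
  rintro ⟨⟨a, b⟩, c, d⟩ - ⟨⟨a', b'⟩, c', d'⟩ - h
  have h0 := DFunLike.congr_fun h 0
  have h1 := DFunLike.congr_fun h 1
  have h2 := DFunLike.congr_fun h 2
  have h3 := DFunLike.congr_fun h 3
  simp only [mk4_0, mk4_1, mk4_2, mk4_3] at h0 h1 h2 h3
  subst h0 h1 h2 h3
  rfl

end Aux7

theorem stmt7 (k : Type*) [Field k] (n1 n2 : ℕ) (h1 : 2 ≤ n1) (h2 : 2 ≤ n2)
    (I : Ideal (MvPolynomial (Fin 4) k))
    (hI : I = (Ideal.span {X 0, X 1}) ^ n1 + (Ideal.span {X 2, X 3}) ^ n2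
        + Ideal.span {X 0 * X 2 - X 1 * X 3}) :
    Module.finrank k (MvPolynomial (Fin 4) k ⧸ I) = n1 * n2 * (n1 + n2) / 2 := by
  classical
  -- membership lemmas
  have memX : ∀ v : Fin 4 →₀ ℕ, n1 ≤ v 0 + v 1 → monomial v (1:k) ∈ I := by
    intro v hv
    have h1' : min (v 0) n1 ≤ v 0 := min_le_left _ _
    have h2' : n1 - min (v 0) n1 ≤ v 1 := by omega
    have harg : mk4 (v 0 - min (v 0) n1) (v 1 - (n1 - min (v 0) n1)) (v 2) (v 3)
        + mk4 (min (v 0) n1) (n1 - min (v 0) n1) 0 0 = v := by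
      rw [mk4_add]
      conv_rhs => rw [← mk4_eta v]
      exact mk4_congr (by omega) (by omega) (by omega) (by omega)
    have hsplit : monomial v (1:k) =
        monomial (mk4 (v 0 - min (v 0) n1) (v 1 - (n1 - min (v 0) n1)) (v 2) (v 3)) 1
          * monomial (mk4 (min (v 0) n1) (n1 - min (v 0) n1) 0 0) 1 := by
      rw [monomial_mul, mul_one, harg]
    rw [hsplit]
    apply Ideal.mul_mem_left
    have hx : monomial (mk4 (min (v 0) n1) (n1 - min (v 0) n1) 0 0) (1:k)
        = X 0 ^ (min (v 0) n1) * X 1 ^ (n1 - min (v 0) n1) := by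
      rw [mon_mk4]; simp
    rw [hx, hI]
    refine Submodule.mem_sup_left (Submodule.mem_sup_left ?_)
    have hpow : (Ideal.span {(X 0 : MvPolynomial (Fin 4) k), X 1}) ^ n1
        = (Ideal.span {(X 0 : MvPolynomial (Fin 4) k), X 1}) ^ (min (v 0) n1)
          * (Ideal.span {(X 0 : MvPolynomial (Fin 4) k), X 1}) ^ (n1 - min (v 0) n1) := by
      rw [← pow_add]; congr 1; omega
    rw [hpow]
    exact Ideal.mul_mem_mul
      (Ideal.pow_mem_pow (Ideal.subset_span (by simp)) _)
      (Ideal.pow_mem_pow (Ideal.subset_span (by simp)) _)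
  have memZ : ∀ v : Fin 4 →₀ ℕ, n2 ≤ v 2 + v 3 → monomial v (1:k) ∈ I := by
    intro v hv
    have h1' : min (v 2) n2 ≤ v 2 := min_le_left _ _
    have h2' : n2 - min (v 2) n2 ≤ v 3 := by omega
    have harg : mk4 (v 0) (v 1) (v 2 - min (v 2) n2) (v 3 - (n2 - min (v 2) n2))
        + mk4 0 0 (min (v 2) n2) (n2 - min (v 2) n2) = v := by
      rw [mk4_add]
      conv_rhs => rw [← mk4_eta v]
      exact mk4_congr (by omega) (by omega) (by omega) (by omega)
    have hsplit : monomial v (1:k) =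
        monomial (mk4 (v 0) (v 1) (v 2 - min (v 2) n2) (v 3 - (n2 - min (v 2) n2))) 1
          * monomial (mk4 0 0 (min (v 2) n2) (n2 - min (v 2) n2)) 1 := by
      rw [monomial_mul, mul_one, harg]
    rw [hsplit]
    apply Ideal.mul_mem_left
    have hx : monomial (mk4 0 0 (min (v 2) n2) (n2 - min (v 2) n2)) (1:k)
        = X 2 ^ (min (v 2) n2) * X 3 ^ (n2 - min (v 2) n2) := by
      rw [mon_mk4]; simp
    rw [hx, hI]
    refine Submodule.mem_sup_left (Submodule.mem_sup_right ?_)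
    have hpow : (Ideal.span {(X 2 : MvPolynomial (Fin 4) k), X 3}) ^ n2
        = (Ideal.span {(X 2 : MvPolynomial (Fin 4) k), X 3}) ^ (min (v 2) n2)
          * (Ideal.span {(X 2 : MvPolynomial (Fin 4) k), X 3}) ^ (n2 - min (v 2) n2) := by
      rw [← pow_add]; congr 1; omega
    rw [hpow]
    exact Ideal.mul_mem_mul
      (Ideal.pow_mem_pow (Ideal.subset_span (by simp)) _)
      (Ideal.pow_mem_pow (Ideal.subset_span (by simp)) _)
  have memF : ∀ p : MvPolynomial (Fin 4) k, p * (X 0 * X 2 - X 1 * X 3) ∈ I := by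
    intro p
    rw [hI]
    exact Ideal.mul_mem_left _ p (Submodule.mem_sup_right (Ideal.subset_span rfl))
  -- the family
  set f : ↥(tFin n1 n2) → MvPolynomial (Fin 4) k ⧸ I :=
    fun v => Ideal.Quotient.mkₐ k I (monomial v.1 1) with hf
  -- spanning
  have hspan : ⊤ ≤ Submodule.span k (Set.range f) := by
    have hzero : ∀ v : Fin 4 →₀ ℕ, (n1 ≤ v 0 + v 1 ∨ n2 ≤ v 2 + v 3) →
        Ideal.Quotient.mkₐ k I (monomial v (1:k)) = 0 := by
      intro v hv
      rw [Ideal.Quotient.mkₐ_eq_mk, Ideal.Quotient.eq_zero_iff_mem]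
      rcases hv with hv | hv
      · exact memX v hv
      · exact memZ v hv
    have hmem : ∀ v : Fin 4 →₀ ℕ, v 0 + v 1 < n1 → v 2 + v 3 < n2 → (v 0 = 0 ∨ v 2 = 0) →
        Ideal.Quotient.mkₐ k I (monomial v (1:k)) ∈ Submodule.span k (Set.range f) := by
      intro v ha hb hc
      exact Submodule.subset_span ⟨⟨v, mem_tFin.mpr ⟨ha, hb, hc⟩⟩, rfl⟩
    have main : ∀ N, ∀ v : Fin 4 →₀ ℕ, v 0 ≤ N →
        Ideal.Quotient.mkₐ k I (monomial v (1:k)) ∈ Submodule.span k (Set.range f) := by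
      intro N
      induction N with
      | zero =>
        intro v hv
        by_cases ha : n1 ≤ v 0 + v 1
        · rw [hzero v (Or.inl ha)]; exact zero_mem _
        by_cases hb : n2 ≤ v 2 + v 3
        · rw [hzero v (Or.inr hb)]; exact zero_mem _
        exact hmem v (by omega) (by omega) (Or.inl (by omega))
      | succ N ih =>
        intro v hv
        by_cases ha : n1 ≤ v 0 + v 1
        · rw [hzero v (Or.inl ha)]; exact zero_mem _
        by_cases hb : n2 ≤ v 2 + v 3
        · rw [hzero v (Or.inr hb)]; exact zero_mem _
        by_cases hc : v 0 = 0 ∨ v 2 = 0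
        · exact hmem v (by omega) (by omega) hc
        push_neg at hc
        have h0 : 1 ≤ v 0 := by omega
        have h02 : 1 ≤ v 2 := by omega
        set v' : Fin 4 →₀ ℕ := mk4 (v 0 - 1) (v 1 + 1) (v 2 - 1) (v 3 + 1) with hv'
        set u : Fin 4 →₀ ℕ := mk4 (v 0 - 1) (v 1) (v 2 - 1) (v 3) with hu
        have huv : u + mk4 1 0 1 0 = v := by
          rw [hu, mk4_add]
          conv_rhs => rw [← mk4_eta v]
          exact mk4_congr (by omega) (by omega) (by omega) (by omega)
        have huv' : u + mk4 0 1 0 1 = v' := by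
          rw [hu, hv', mk4_add]
          exact mk4_congr (by omega) rfl (by omega) rfl
        have e1 : monomial v (1:k) - monomial v' 1
            = monomial u 1 * (X 0 * X 2 - X 1 * X 3) := by
          rw [mul_sub, ← monXZ, ← monYW, monomial_mul, monomial_mul, mul_one, huv, huv']
        have e2 : Ideal.Quotient.mkₐ k I (monomial v (1:k))
            = Ideal.Quotient.mkₐ k I (monomial v' 1) := by
          have : Ideal.Quotient.mkₐ k I (monomial v (1:k))
              - Ideal.Quotient.mkₐ k I (monomial v' 1) = 0 := by
            rw [← map_sub, e1, Ideal.Quotient.mkₐ_eq_mk, Ideal.Quotient.eq_zero_iff_mem]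
            exact memF _
          exact sub_eq_zero.mp this
        rw [e2]
        exact ih v' (by rw [hv']; simp; omega)
    intro x hx
    clear hx
    obtain ⟨p, rfl⟩ := Ideal.Quotient.mk_surjective x
    rw [show (Ideal.Quotient.mk I) p = Ideal.Quotient.mkₐ k I p from rfl]
    induction p using MvPolynomial.induction_on' with
    | monomial u r =>
      have : (Ideal.Quotient.mkₐ k I) (monomial u r)
          = r • (Ideal.Quotient.mkₐ k I) (monomial u 1) := by
        rw [← map_smul]
        congr 1
        rw [MvPolynomial.smul_monomial, smul_eq_mul, mul_one]
      rw [this]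
      exact Submodule.smul_mem _ _ (main (u 0) u le_rfl)
    | add p q hp hq =>
      rw [map_add]; exact add_mem hp hq
  -- independence
  have hI_le_ker : Submodule.restrictScalars k (I : Ideal (MvPolynomial (Fin 4) k))
      ≤ LinearMap.ker (psi k n1 n2) := by
    intro p hp
    rw [LinearMap.mem_ker]
    exact psi_vanish k n1 n2 p (hI ▸ hp)
  set ψbar : (MvPolynomial (Fin 4) k ⧸ I) →ₗ[k] ((Fin 4 →₀ ℕ) →₀ k) :=
    (Submodule.liftQ (Submodule.restrictScalars k I) (psi k n1 n2) hI_le_ker).comp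
      (Submodule.Quotient.restrictScalarsEquiv k I).symm.toLinearMap with hψ
  have hψbar : ∀ p, ψbar (Ideal.Quotient.mkₐ k I p) = psi k n1 n2 p := by
    intro p
    rw [hψ]
    rw [show Ideal.Quotient.mkₐ k I p = Submodule.Quotient.mk p from rfl]
    rw [LinearMap.comp_apply, LinearEquiv.coe_toLinearMap,
      Submodule.Quotient.restrictScalarsEquiv_symm_mk, Submodule.liftQ_apply]
  have hcomp : ⇑ψbar ∘ f = fun v : ↥(tFin n1 n2) =>
      Finsupp.single (v : Fin 4 →₀ ℕ) (1:k) := by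
    funext v
    have hv := mem_tFin.mp v.2
    have : (⇑ψbar ∘ f) v = ψbar (Ideal.Quotient.mkₐ k I (monomial v.1 1)) := rfl
    rw [this, hψbar, psi_monomial, one_smul]
    unfold theta
    rw [if_pos ⟨hv.1, hv.2.1⟩]
    congr 1
    have hmin : min ((v : Fin 4 →₀ ℕ) 0) ((v : Fin 4 →₀ ℕ) 2) = 0 := by
      rcases hv.2.2 with h | h <;> simp [h]
    unfold red
    rw [hmin]
    simp only [Nat.sub_zero, Nat.add_zero]
    exact mk4_eta _
  have hli : LinearIndependent k f := by
    apply LinearIndependent.of_comp ψbar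
    rw [hcomp]
    have heq : (fun v : ↥(tFin n1 n2) => Finsupp.single (v : Fin 4 →₀ ℕ) (1:k))
        = (⇑(Finsupp.basisSingleOne (R := k) (ι := Fin 4 →₀ ℕ))) ∘ Subtype.val := by
      funext v; simp [Finsupp.coe_basisSingleOne]
    rw [heq]
    exact (Finsupp.basisSingleOne.linearIndependent).comp _ Subtype.val_injective
  -- basis and counting
  let B : Module.Basis (↥(tFin n1 n2)) k (MvPolynomial (Fin 4) k ⧸ I) := Module.Basis.mk hli hspan
  rw [Module.finrank_eq_card_basis B, Fintype.card_coe, card_tFin]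
  have hc := card_sSet h1 h2
  rw [← hc, Nat.mul_div_cancel_left _ (by norm_num : 0 < 2)]
end

section
/- Let $k$ be a field, $S = k[x,y,z,w]$, and for $n_1, n_2 \ge 2$ let $I = (x,y)^{n_1} + (z,w)^{n_2} + (xz-yw)$. Then the set $\mathcal{B} = \{ x^{u_1}y^{u_2}z^{u_3}w^{u_4} + I : u_1+u_2 < n_1,\ u_3+u_4 < n_2,\ u_2 u_4 = 0 \}$ is a $k$-vector space basis of $S/I$. -/
/-!
Modulo `xz - yw` the monomial `x^a y^b z^c w^d` equals `x^(a+m) y^(b-m) z^(c+m) w^(d-m)` with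
`m = min b d`, and the box conditions `a + b < n₁`, `c + d < n₂` are unchanged by this move. So
every monomial is congruent to a standard one or lies in `(x,y)^n₁ + (z,w)^n₂`, and the standard
monomials span `S/I`. Conversely the `k`-linear map sending each monomial to its normal form (and
to `0` outside the box) vanishes on `I`: the box conditions are stable under multiplication by
monomials, and the normal form does not see the difference between `xz` and `yw`. Since this map
is the identity on standard monomials, they are linearly independent modulo `I`.
-/

open MvPolynomial

theorem Ideal.pow_mul_pow_mem_span_pair_pow {S : Type*} [CommSemiring S] (a b : S) (i j : ℕ) :
    a ^ i * b ^ j ∈ Ideal.span {a, b} ^ (i + j) :=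
  pow_add (Ideal.span {a, b}) i j ▸ Ideal.mul_mem_mul
    (Ideal.pow_mem_pow (Ideal.subset_span (by simp)) i)
    (Ideal.pow_mem_pow (Ideal.subset_span (by simp)) j)

theorem Ideal.span_pair_pow_le {S : Type*} [CommSemiring S] {a b : S} {J : Ideal S} {n : ℕ}
    (h : ∀ i j, i + j = n → a ^ i * b ^ j ∈ J) : Ideal.span {a, b} ^ n ≤ J := by
  induction n generalizing J with
  | zero => simpa [Ideal.one_eq_top, Ideal.eq_top_iff_one] using h 0 0 rfl
  | succ n ih =>
    have hcolon : Ideal.span {a, b} ^ n ≤ J.colon (Ideal.span {a, b}) := by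
      refine ih fun i j hij => Submodule.mem_colon.2 fun s hs => ?_
      obtain ⟨c, d, rfl⟩ := Submodule.mem_span_pair.1 hs
      have hsplit : (a ^ i * b ^ j) • (c • a + d • b) =
          c * (a ^ (i + 1) * b ^ j) + d * (a ^ i * b ^ (j + 1)) := by
        simp only [smul_eq_mul]; ring
      rw [hsplit]
      exact J.add_mem (J.mul_mem_left c (h _ _ (by omega))) (J.mul_mem_left d (h _ _ (by omega)))
    rw [pow_succ, Submodule.mul_le]
    exact fun m hm s hs => Submodule.mem_colon.1 (hcolon hm) s hs

section KerIdeal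

variable {R S M : Type*} [CommSemiring R] [CommSemiring S] [Algebra R S] [AddCommMonoid M]
  [Module R M]

def LinearMap.kerIdeal (L : S →ₗ[R] M) : Ideal S where
  carrier := {p | ∀ a, L (a * p) = 0}
  zero_mem' a := by simp
  add_mem' hp hq a := by simp [mul_add, hp a, hq a]
  smul_mem' c p hp a := by simpa [mul_assoc] using hp (a * c)

theorem LinearMap.apply_eq_zero_of_mem_kerIdeal {L : S →ₗ[R] M} {p : S}
    (hp : p ∈ L.kerIdeal) : L p = 0 := by
  simpa using hp 1

theorem LinearMap.mem_kerIdeal_of_basis {ι : Type*} (b : Module.Basis ι R S) {L : S →ₗ[R] M}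
    {p : S} (h : ∀ i, L (b i * p) = 0) : p ∈ L.kerIdeal := fun a =>
  LinearMap.congr_fun (b.ext (f₁ := L ∘ₗ LinearMap.mulRight R p) (f₂ := 0) h) a

end KerIdeal

/-- `L m` is the coordinate vector of a normal form of `m` in terms of `b`. -/
theorem Module.Basis.exists_of_normalForm {ι R M Q : Type*} [Ring R] [AddCommGroup M]
    [Module R M] [AddCommGroup Q] [Module R Q] (π : M →ₗ[R] Q) (hπ : Function.Surjective π)
    (b : ι → M) (L : M →ₗ[R] ι →₀ R) (hL : ∀ m, π m = 0 → L m = 0)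
    (hLb : ∀ i, L (b i) = Finsupp.single i 1)
    (hπL : ∀ m, π m = Finsupp.linearCombination R (π ∘ b) (L m)) :
    ∃ B : Module.Basis ι R Q, ⇑B = π ∘ b := by
  have hL_comb (l : ι →₀ R) : L (Finsupp.linearCombination R b l) = l := by
    have : L ∘ₗ Finsupp.linearCombination R b = LinearMap.id := by ext i; simp [hLb]
    exact LinearMap.congr_fun this l
  have hli : LinearIndependent R (π ∘ b) := by
    rw [linearIndependent_iff]
    intro l hl
    rw [← Finsupp.apply_linearCombination] at hl
    rw [← hL_comb l, hL _ hl]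
  have hsp : ⊤ ≤ Submodule.span R (Set.range (π ∘ b)) := by
    rintro q -
    obtain ⟨m, rfl⟩ := hπ q
    rw [hπL, ← Finsupp.range_linearCombination]
    exact LinearMap.mem_range_self _ _
  exact ⟨Module.Basis.mk hli hsp, Module.Basis.coe_mk hli hsp⟩

namespace XZYWQuotient

noncomputable section

variable {R : Type*} [CommRing R] (n₁ n₂ : ℕ)

def ideal : Ideal (MvPolynomial (Fin 4) R) :=
  Ideal.span {X 0, X 1} ^ n₁ + Ideal.span {X 2, X 3} ^ n₂ + Ideal.span {X 0 * X 2 - X 1 * X 3}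

abbrev StandardExponent :=
  {u : ℕ × ℕ × ℕ × ℕ // u.1 + u.2.1 < n₁ ∧ u.2.2.1 + u.2.2.2 < n₂ ∧ u.2.1 * u.2.2.2 = 0}

variable (R) in
def tupleMonomial (u : ℕ × ℕ × ℕ × ℕ) : MvPolynomial (Fin 4) R :=
  X 0 ^ u.1 * X 1 ^ u.2.1 * X 2 ^ u.2.2.1 * X 3 ^ u.2.2.2

def exponentEquiv : (Fin 4 →₀ ℕ) ≃ ℕ × ℕ × ℕ × ℕ where
  toFun v := (v 0, v 1, v 2, v 3)
  invFun u := .single 0 u.1 + .single 1 u.2.1 + .single 2 u.2.2.1 + .single 3 u.2.2.2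
  left_inv v := by ext i; fin_cases i <;> simp
  right_inv u := by simp

variable (R) in
def tupleBasis : Module.Basis (ℕ × ℕ × ℕ × ℕ) R (MvPolynomial (Fin 4) R) :=
  (basisMonomials (Fin 4) R).reindex exponentEquiv

@[simp]
theorem tupleBasis_apply (u : ℕ × ℕ × ℕ × ℕ) : tupleBasis R u = tupleMonomial R u := by
  simp [tupleBasis, tupleMonomial, exponentEquiv, X_pow_eq_monomial, monomial_mul]

def normalExponent (u : ℕ × ℕ × ℕ × ℕ) : ℕ × ℕ × ℕ × ℕ :=
  (u.1 + min u.2.1 u.2.2.2, u.2.1 - min u.2.1 u.2.2.2, u.2.2.1 + min u.2.1 u.2.2.2,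
    u.2.2.2 - min u.2.1 u.2.2.2)

theorem normalExponent_mem {u : ℕ × ℕ × ℕ × ℕ}
    (h : u.1 + u.2.1 < n₁ ∧ u.2.2.1 + u.2.2.2 < n₂) :
    (normalExponent u).1 + (normalExponent u).2.1 < n₁ ∧
      (normalExponent u).2.2.1 + (normalExponent u).2.2.2 < n₂ ∧
      (normalExponent u).2.1 * (normalExponent u).2.2.2 = 0 := by
  simp only [normalExponent, Nat.mul_eq_zero]
  omega

variable (R) in
def normalForm (u : ℕ × ℕ × ℕ × ℕ) : StandardExponent n₁ n₂ →₀ R :=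
  if h : u.1 + u.2.1 < n₁ ∧ u.2.2.1 + u.2.2.2 < n₂ then
    Finsupp.single ⟨normalExponent u, normalExponent_mem n₁ n₂ h⟩ 1
  else 0

theorem normalForm_standardExponent (u : StandardExponent n₁ n₂) :
    normalForm R n₁ n₂ u = Finsupp.single u 1 := by
  obtain ⟨⟨a, b, c, d⟩, hab, hcd, hbd⟩ := u
  rw [normalForm, dif_pos ⟨hab, hcd⟩]
  congr
  simp only [normalExponent, Prod.mk.injEq]
  rcases Nat.mul_eq_zero.1 hbd with rfl | rfl <;> simp

theorem normalForm_eq_zero_of_le_left {a b c d : ℕ} (h : n₁ ≤ a + b) :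
    normalForm R n₁ n₂ (a, b, c, d) = 0 :=
  dif_neg (by dsimp only; omega)

theorem normalForm_eq_zero_of_le_right {a b c d : ℕ} (h : n₂ ≤ c + d) :
    normalForm R n₁ n₂ (a, b, c, d) = 0 :=
  dif_neg (by dsimp only; omega)

theorem normalForm_xz_eq_yw (a b c d : ℕ) :
    normalForm R n₁ n₂ (a + 1, b, c + 1, d) = normalForm R n₁ n₂ (a, b + 1, c, d + 1) := by
  simp only [normalForm]
  by_cases h : a + b + 1 < n₁ ∧ c + d + 1 < n₂
  · rw [dif_pos (by omega), dif_pos (by omega)]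
    congr 1
    apply Subtype.ext
    simp only [normalExponent, Prod.mk.injEq]
    omega
  · rw [dif_neg (by omega), dif_neg (by omega)]

theorem pow_left_le_ideal : Ideal.span {X 0, X 1} ^ n₁ ≤ ideal (R := R) n₁ n₂ :=
  le_sup_left.trans le_sup_left

theorem pow_right_le_ideal : Ideal.span {X 2, X 3} ^ n₂ ≤ ideal (R := R) n₁ n₂ :=
  le_sup_right.trans le_sup_left

theorem xz_sub_yw_mem_ideal : X 0 * X 2 - X 1 * X 3 ∈ ideal (R := R) n₁ n₂ :=
  Ideal.mem_sup_right (Ideal.mem_span_singleton_self _)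

theorem tupleMonomial_mem_ideal_of_le_left {a b c d : ℕ} (h : n₁ ≤ a + b) :
    tupleMonomial R (a, b, c, d) ∈ ideal n₁ n₂ := by
  have hab := Ideal.pow_le_pow_right h
    (Ideal.pow_mul_pow_mem_span_pair_pow (X 0 : MvPolynomial (Fin 4) R) (X 1) a b)
  have := Ideal.mul_mem_right (X 2 ^ c * X 3 ^ d) _ (pow_left_le_ideal n₁ n₂ hab)
  simpa only [tupleMonomial, mul_assoc] using this

theorem tupleMonomial_mem_ideal_of_le_right {a b c d : ℕ} (h : n₂ ≤ c + d) :
    tupleMonomial R (a, b, c, d) ∈ ideal n₁ n₂ := by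
  have hcd := Ideal.pow_le_pow_right h
    (Ideal.pow_mul_pow_mem_span_pair_pow (X 2 : MvPolynomial (Fin 4) R) (X 3) c d)
  have := Ideal.mul_mem_left _ (X 0 ^ a * X 1 ^ b) (pow_right_le_ideal n₁ n₂ hcd)
  simpa only [tupleMonomial, mul_assoc] using this

theorem mk_tupleMonomial_normalExponent (u : ℕ × ℕ × ℕ × ℕ) :
    Ideal.Quotient.mk (ideal n₁ n₂) (tupleMonomial R (normalExponent u)) =
      Ideal.Quotient.mk (ideal n₁ n₂) (tupleMonomial R u) := by
  obtain ⟨a, b, c, d⟩ := u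
  obtain ⟨b', hb⟩ : ∃ b', b = b' + min b d := ⟨b - min b d, by omega⟩
  obtain ⟨d', hd⟩ : ∃ d', d = d' + min b d := ⟨d - min b d, by omega⟩
  set q := Ideal.Quotient.mk (ideal (R := R) n₁ n₂)
  have hrel : q (X 0) * q (X 2) = q (X 1) * q (X 3) := by
    rw [← map_mul, ← map_mul]
    exact Ideal.Quotient.eq.2 (xz_sub_yw_mem_ideal n₁ n₂)
  simp only [normalExponent, tupleMonomial, map_mul, map_pow]
  generalize min b d = m at hb hd ⊢
  subst hb hd
  rw [Nat.add_sub_cancel, Nat.add_sub_cancel]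
  linear_combination (q (X 0) ^ a * q (X 1) ^ b' * q (X 2) ^ c * q (X 3) ^ d') *
    congrArg (· ^ m) hrel

variable (R) in
def normalFormMap : MvPolynomial (Fin 4) R →ₗ[R] StandardExponent n₁ n₂ →₀ R :=
  (tupleBasis R).constr R (normalForm R n₁ n₂)

theorem normalFormMap_tupleMonomial (u : ℕ × ℕ × ℕ × ℕ) :
    normalFormMap R n₁ n₂ (tupleMonomial R u) = normalForm R n₁ n₂ u := by
  rw [normalFormMap, ← tupleBasis_apply, Module.Basis.constr_basis]

theorem ideal_le_kerIdeal_normalFormMap : ideal n₁ n₂ ≤ (normalFormMap R n₁ n₂).kerIdeal := by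
  refine sup_le (sup_le ?_ ?_) ?_
  · refine Ideal.span_pair_pow_le fun i j hij =>
      LinearMap.mem_kerIdeal_of_basis (tupleBasis R) fun ⟨a, b, c, d⟩ => ?_
    have hmul : tupleBasis R (a, b, c, d) * (X 0 ^ i * X 1 ^ j) =
        tupleMonomial R (a + i, b + j, c, d) := by
      simp only [tupleBasis_apply, tupleMonomial]; ring
    rw [hmul, normalFormMap_tupleMonomial, normalForm_eq_zero_of_le_left]
    omega
  · refine Ideal.span_pair_pow_le fun i j hij =>
      LinearMap.mem_kerIdeal_of_basis (tupleBasis R) fun ⟨a, b, c, d⟩ => ?_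
    have hmul : tupleBasis R (a, b, c, d) * (X 2 ^ i * X 3 ^ j) =
        tupleMonomial R (a, b, c + i, d + j) := by
      simp only [tupleBasis_apply, tupleMonomial]; ring
    rw [hmul, normalFormMap_tupleMonomial, normalForm_eq_zero_of_le_right]
    omega
  · rw [Ideal.span_le, Set.singleton_subset_iff]
    refine LinearMap.mem_kerIdeal_of_basis (tupleBasis R) fun ⟨a, b, c, d⟩ => ?_
    have hmul : tupleBasis R (a, b, c, d) * (X 0 * X 2 - X 1 * X 3) =
        tupleMonomial R (a + 1, b, c + 1, d) - tupleMonomial R (a, b + 1, c, d + 1) := by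
      simp only [tupleBasis_apply, tupleMonomial]; ring
    rw [hmul, map_sub, normalFormMap_tupleMonomial, normalFormMap_tupleMonomial,
      normalForm_xz_eq_yw, sub_self]

theorem normalFormMap_eq_zero_of_mem {p : MvPolynomial (Fin 4) R} (hp : p ∈ ideal n₁ n₂) :
    normalFormMap R n₁ n₂ p = 0 :=
  LinearMap.apply_eq_zero_of_mem_kerIdeal (ideal_le_kerIdeal_normalFormMap n₁ n₂ hp)

theorem mk_tupleMonomial_eq_linearCombination_normalForm (u : ℕ × ℕ × ℕ × ℕ) :
    Ideal.Quotient.mk (ideal n₁ n₂) (tupleMonomial R u) = Finsupp.linearCombination R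
      (fun u : StandardExponent n₁ n₂ => Ideal.Quotient.mk (ideal n₁ n₂) (tupleMonomial R u))
      (normalForm R n₁ n₂ u) := by
  obtain ⟨a, b, c, d⟩ := u
  by_cases hab : n₁ ≤ a + b
  · rw [normalForm_eq_zero_of_le_left n₁ n₂ hab, map_zero,
      Ideal.Quotient.eq_zero_iff_mem.2 (tupleMonomial_mem_ideal_of_le_left n₁ n₂ hab)]
  by_cases hcd : n₂ ≤ c + d
  · rw [normalForm_eq_zero_of_le_right n₁ n₂ hcd, map_zero,
      Ideal.Quotient.eq_zero_iff_mem.2 (tupleMonomial_mem_ideal_of_le_right n₁ n₂ hcd)]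
  rw [normalForm, dif_pos (by dsimp only; omega), Finsupp.linearCombination_single, one_smul,
    mk_tupleMonomial_normalExponent]

theorem mk_eq_linearCombination_normalFormMap (p : MvPolynomial (Fin 4) R) :
    Ideal.Quotient.mk (ideal n₁ n₂) p = Finsupp.linearCombination R
      (fun u : StandardExponent n₁ n₂ => Ideal.Quotient.mk (ideal n₁ n₂) (tupleMonomial R u))
      (normalFormMap R n₁ n₂ p) := by
  have hext := (tupleBasis R).ext (f₁ := (Ideal.Quotient.mkₐ R (ideal n₁ n₂)).toLinearMap)
    (f₂ := Finsupp.linearCombination R _ ∘ₗ normalFormMap R n₁ n₂) fun u => by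
      simpa [normalFormMap_tupleMonomial] using
        mk_tupleMonomial_eq_linearCombination_normalForm n₁ n₂ u
  exact LinearMap.congr_fun hext p

end

end XZYWQuotient

open XZYWQuotient in
theorem stmt8_general (k : Type*) [Field k] (n1 n2 : ℕ)
    (I : Ideal (MvPolynomial (Fin 4) k))
    (hI : I = (Ideal.span {X 0, X 1}) ^ n1 + (Ideal.span {X 2, X 3}) ^ n2
        + Ideal.span {X 0 * X 2 - X 1 * X 3}) :
    ∃ B : Module.Basis {u : ℕ × ℕ × ℕ × ℕ //
        u.1 + u.2.1 < n1 ∧ u.2.2.1 + u.2.2.2 < n2 ∧ u.2.1 * u.2.2.2 = 0}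
      k (MvPolynomial (Fin 4) k ⧸ I),
      ∀ u, B u = Ideal.Quotient.mk I
        (X 0 ^ u.1.1 * X 1 ^ u.1.2.1 * X 2 ^ u.1.2.2.1 * X 3 ^ u.1.2.2.2) := by
  change I = ideal n1 n2 at hI
  subst hI
  obtain ⟨B, hB⟩ := Module.Basis.exists_of_normalForm
    (Ideal.Quotient.mkₐ k (ideal n1 n2)).toLinearMap Ideal.Quotient.mk_surjective
    (fun u : StandardExponent n1 n2 => tupleMonomial k u.1) (normalFormMap k n1 n2)
    (fun _ hp => normalFormMap_eq_zero_of_mem n1 n2 (Ideal.Quotient.eq_zero_iff_mem.1 hp))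
    (fun u => by rw [normalFormMap_tupleMonomial, normalForm_standardExponent])
    (mk_eq_linearCombination_normalFormMap n1 n2)
  exact ⟨B, fun u => congr_fun hB u⟩

theorem stmt8 (k : Type*) [Field k] (n1 n2 : ℕ) (h1 : 2 ≤ n1) (h2 : 2 ≤ n2)
    (I : Ideal (MvPolynomial (Fin 4) k))
    (hI : I = (Ideal.span {X 0, X 1}) ^ n1 + (Ideal.span {X 2, X 3}) ^ n2
        + Ideal.span {X 0 * X 2 - X 1 * X 3}) :
    ∃ B : Module.Basis {u : ℕ × ℕ × ℕ × ℕ //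
        u.1 + u.2.1 < n1 ∧ u.2.2.1 + u.2.2.2 < n2 ∧ u.2.1 * u.2.2.2 = 0}
      k (MvPolynomial (Fin 4) k ⧸ I),
      ∀ u, B u = Ideal.Quotient.mk I
        (X 0 ^ u.1.1 * X 1 ^ u.1.2.1 * X 2 ^ u.1.2.2.1 * X 3 ^ u.1.2.2.2) :=
  stmt8_general k n1 n2 I hI
end

section
/- Let $k$ be a field, $S = k[x,y,z,w]$, $n_1, n_2 \ge 2$, $I = (x,y)^{n_1} + (z,w)^{n_2} + (xz-yw)$, and $A = S/I$. Then the annihilator of the image of $x$ in $A$ equals the annihilator of the image of $y$ in $A$. -/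
open MvPolynomial

namespace Stmt9Aux

variable {k : Type*} [Field k]

/-- exponent vector -/
noncomputable def E (a b c e : ℕ) : Fin 4 →₀ ℕ :=
  Finsupp.single 0 a + Finsupp.single 1 b + Finsupp.single 2 c + Finsupp.single 3 e

@[simp] lemma E_apply0 (a b c e : ℕ) : E a b c e 0 = a := by
  simp [E, Finsupp.single_apply]
@[simp] lemma E_apply1 (a b c e : ℕ) : E a b c e 1 = b := by
  simp [E, Finsupp.single_apply]
@[simp] lemma E_apply2 (a b c e : ℕ) : E a b c e 2 = c := by
  simp [E, Finsupp.single_apply]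
@[simp] lemma E_apply3 (a b c e : ℕ) : E a b c e 3 = e := by
  simp [E, Finsupp.single_apply]

lemma eq_E (d : Fin 4 →₀ ℕ) : d = E (d 0) (d 1) (d 2) (d 3) := by
  ext i
  fin_cases i <;> simp [E, Finsupp.single_apply]

/-- the monomial x^a y^b z^c w^e -/
noncomputable def M (a b c e : ℕ) : MvPolynomial (Fin 4) k :=
  X 0 ^ a * X 1 ^ b * X 2 ^ c * X 3 ^ e

lemma M_eq (a b c e : ℕ) : (M a b c e : MvPolynomial (Fin 4) k) = monomial (E a b c e) 1 := by
  simp only [M, E, X_pow_eq_monomial, monomial_mul, one_mul]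

lemma monomial_one_eq (d : Fin 4 →₀ ℕ) :
    (monomial d 1 : MvPolynomial (Fin 4) k) = M (d 0) (d 1) (d 2) (d 3) := by
  rw [M_eq, ← eq_E]

lemma monomial_eq_smul_M (d : Fin 4 →₀ ℕ) (a : k) :
    (monomial d a : MvPolynomial (Fin 4) k) = a • M (d 0) (d 1) (d 2) (d 3) := by
  rw [← monomial_one_eq, smul_monomial, smul_eq_mul, mul_one]

/-- normal-form division by x on monomials -/
noncomputable def T (d : Fin 4 →₀ ℕ) : MvPolynomial (Fin 4) k :=
  if 1 ≤ d 0 then M (d 0 - 1) (d 1) (d 2) (d 3)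
  else if 1 ≤ d 1 ∧ 1 ≤ d 3 then M 0 (d 1 - 1) (d 2 + 1) (d 3 - 1) else 0

/-- normal-form division by y on monomials -/
noncomputable def T' (d : Fin 4 →₀ ℕ) : MvPolynomial (Fin 4) k :=
  if 1 ≤ d 1 then M (d 0) (d 1 - 1) (d 2) (d 3)
  else if 1 ≤ d 0 ∧ 1 ≤ d 2 then M (d 0 - 1) 0 (d 2 - 1) (d 3 + 1) else 0

noncomputable def psi : MvPolynomial (Fin 4) k →ₗ[k] MvPolynomial (Fin 4) k :=
  (basisMonomials (Fin 4) k).constr k (T (k := k))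

noncomputable def psi' : MvPolynomial (Fin 4) k →ₗ[k] MvPolynomial (Fin 4) k :=
  (basisMonomials (Fin 4) k).constr k (T' (k := k))

lemma psi_monomial (d : Fin 4 →₀ ℕ) (c : k) : psi (monomial d c) = c • T d := by
  have h : (monomial d c : MvPolynomial (Fin 4) k) = c • monomial d 1 := by
    rw [smul_monomial, smul_eq_mul, mul_one]
  rw [h, map_smul]
  congr 1
  have := Module.Basis.constr_basis (basisMonomials (Fin 4) k) k (T (k := k)) d
  simpa [coe_basisMonomials, psi] using this

lemma psi'_monomial (d : Fin 4 →₀ ℕ) (c : k) : psi' (monomial d c) = c • T' d := by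
  have h : (monomial d c : MvPolynomial (Fin 4) k) = c • monomial d 1 := by
    rw [smul_monomial, smul_eq_mul, mul_one]
  rw [h, map_smul]
  congr 1
  have := Module.Basis.constr_basis (basisMonomials (Fin 4) k) k (T' (k := k)) d
  simpa [coe_basisMonomials, psi'] using this

lemma psi_M (a b c e : ℕ) :
    psi (M a b c e : MvPolynomial (Fin 4) k) =
      if 1 ≤ a then M (a - 1) b c e
      else if 1 ≤ b ∧ 1 ≤ e then M 0 (b - 1) (c + 1) (e - 1) else 0 := by
  rw [M_eq, psi_monomial, one_smul, T]
  simp only [E_apply0, E_apply1, E_apply2, E_apply3]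

lemma psi'_M (a b c e : ℕ) :
    psi' (M a b c e : MvPolynomial (Fin 4) k) =
      if 1 ≤ b then M a (b - 1) c e
      else if 1 ≤ a ∧ 1 ≤ c then M (a - 1) 0 (c - 1) (e + 1) else 0 := by
  rw [M_eq, psi'_monomial, one_smul, T']
  simp only [E_apply0, E_apply1, E_apply2, E_apply3]

lemma psi_X0_mul (f : MvPolynomial (Fin 4) k) : psi (X 0 * f) = f := by
  induction f using MvPolynomial.induction_on' with
  | monomial u a =>
    have h : (X 0 : MvPolynomial (Fin 4) k) * monomial u a
        = a • M (u 0 + 1) (u 1) (u 2) (u 3) := by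
      rw [monomial_eq_smul_M, mul_smul_comm]
      congr 1
      unfold M; ring
    rw [h, map_smul, psi_M, if_pos (Nat.le_add_left 1 (u 0)), Nat.add_sub_cancel,
      ← monomial_eq_smul_M]
  | add p q hp hq =>
    rw [mul_add, map_add, hp, hq]

lemma psi'_X1_mul (f : MvPolynomial (Fin 4) k) : psi' (X 1 * f) = f := by
  induction f using MvPolynomial.induction_on' with
  | monomial u a =>
    have h : (X 1 : MvPolynomial (Fin 4) k) * monomial u a
        = a • M (u 0) (u 1 + 1) (u 2) (u 3) := by
      rw [monomial_eq_smul_M, mul_smul_comm]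
      congr 1
      unfold M; ring
    rw [h, map_smul, psi'_M, if_pos (Nat.le_add_left 1 (u 1)), Nat.add_sub_cancel,
      ← monomial_eq_smul_M]
  | add p q hp hq =>
    rw [mul_add, map_add, hp, hq]

/-! ### The ideals -/

/-- the defining ideal -/
noncomputable def Idl (k : Type*) [Field k] (n1 n2 : ℕ) : Ideal (MvPolynomial (Fin 4) k) :=
  (Ideal.span {X 0, X 1}) ^ n1 + (Ideal.span {X 2, X 3}) ^ n2
    + Ideal.span {X 0 * X 2 - X 1 * X 3}

/-- the common annihilator ideal -/
noncomputable def Jdl (k : Type*) [Field k] (n1 n2 : ℕ) : Ideal (MvPolynomial (Fin 4) k) :=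
  Idl k n1 n2 ⊔ (Ideal.span {X 0, X 1}) ^ (n1 - 1)

lemma P1_le_I (n1 n2 : ℕ) :
    (Ideal.span {(X 0 : MvPolynomial (Fin 4) k), X 1}) ^ n1 ≤ Idl k n1 n2 := by
  rw [Idl, Submodule.add_eq_sup, Submodule.add_eq_sup]
  exact le_trans le_sup_left le_sup_left

lemma P2_le_I (n1 n2 : ℕ) :
    (Ideal.span {(X 2 : MvPolynomial (Fin 4) k), X 3}) ^ n2 ≤ Idl k n1 n2 := by
  rw [Idl, Submodule.add_eq_sup, Submodule.add_eq_sup]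
  exact le_trans le_sup_right le_sup_left

lemma q_span_le_I (n1 n2 : ℕ) :
    Ideal.span {(X 0 : MvPolynomial (Fin 4) k) * X 2 - X 1 * X 3} ≤ Idl k n1 n2 := by
  rw [Idl, Submodule.add_eq_sup, Submodule.add_eq_sup]
  exact le_sup_right

lemma I_le_J (n1 n2 : ℕ) : Idl k n1 n2 ≤ Jdl k n1 n2 := le_sup_left

lemma P1'_le_J (n1 n2 : ℕ) :
    (Ideal.span {(X 0 : MvPolynomial (Fin 4) k), X 1}) ^ (n1 - 1) ≤ Jdl k n1 n2 :=
  le_sup_right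

lemma M_mem_P1_pow {n a b : ℕ} (h : n ≤ a + b) (c e : ℕ) :
    (M a b c e : MvPolynomial (Fin 4) k) ∈ (Ideal.span {X 0, X 1}) ^ n := by
  have hx : (X 0 : MvPolynomial (Fin 4) k) ∈ Ideal.span {X 0, X 1} :=
    Ideal.subset_span (by simp)
  have hy : (X 1 : MvPolynomial (Fin 4) k) ∈ Ideal.span {X 0, X 1} :=
    Ideal.subset_span (by simp)
  have hmem : (X 0 : MvPolynomial (Fin 4) k) ^ a * X 1 ^ b
      ∈ (Ideal.span {X 0, X 1}) ^ (a + b) := by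
    rw [pow_add]
    exact Ideal.mul_mem_mul (Ideal.pow_mem_pow hx a) (Ideal.pow_mem_pow hy b)
  have hmem2 := Ideal.pow_le_pow_right h hmem
  have heq : (M a b c e : MvPolynomial (Fin 4) k) = X 2 ^ c * X 3 ^ e * (X 0 ^ a * X 1 ^ b) := by
    unfold M; ring
  rw [heq]
  exact Ideal.mul_mem_left _ _ hmem2

lemma M_mem_P2_pow {n c e : ℕ} (h : n ≤ c + e) (a b : ℕ) :
    (M a b c e : MvPolynomial (Fin 4) k) ∈ (Ideal.span {X 2, X 3}) ^ n := by
  have hx : (X 2 : MvPolynomial (Fin 4) k) ∈ Ideal.span {X 2, X 3} :=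
    Ideal.subset_span (by simp)
  have hy : (X 3 : MvPolynomial (Fin 4) k) ∈ Ideal.span {X 2, X 3} :=
    Ideal.subset_span (by simp)
  have hmem : (X 2 : MvPolynomial (Fin 4) k) ^ c * X 3 ^ e
      ∈ (Ideal.span {X 2, X 3}) ^ (c + e) := by
    rw [pow_add]
    exact Ideal.mul_mem_mul (Ideal.pow_mem_pow hx c) (Ideal.pow_mem_pow hy e)
  have hmem2 := Ideal.pow_le_pow_right h hmem
  have heq : (M a b c e : MvPolynomial (Fin 4) k) = X 0 ^ a * X 1 ^ b * (X 2 ^ c * X 3 ^ e) := by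
    unfold M; ring
  rw [heq]
  exact Ideal.mul_mem_left _ _ hmem2

lemma M_mul_q (a b c e : ℕ) :
    (M a b c e : MvPolynomial (Fin 4) k) * (X 0 * X 2 - X 1 * X 3)
      = M (a + 1) b (c + 1) e - M a (b + 1) c (e + 1) := by
  unfold M; ring

lemma q_mem_span : (X 0 * X 2 - X 1 * X 3 : MvPolynomial (Fin 4) k)
    ∈ Ideal.span {X 0 * X 2 - X 1 * X 3} :=
  Ideal.subset_span (Set.mem_singleton _)

lemma psi_q_mem (n1 n2 : ℕ) (a b c e : ℕ) :
    psi ((M a b c e : MvPolynomial (Fin 4) k) * (X 0 * X 2 - X 1 * X 3)) ∈ Jdl k n1 n2 := by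
  rw [M_mul_q, map_sub, psi_M, psi_M]
  rcases Nat.eq_zero_or_pos a with rfl | ha
  · rw [if_pos (by omega : (1:ℕ) ≤ 0 + 1), if_neg (by omega : ¬ (1:ℕ) ≤ 0),
      if_pos (⟨by omega, by omega⟩ : (1:ℕ) ≤ b + 1 ∧ (1:ℕ) ≤ e + 1)]
    simp only [Nat.add_sub_cancel, sub_self]
    exact zero_mem _
  · obtain ⟨a', rfl⟩ : ∃ a', a = a' + 1 := ⟨a - 1, by omega⟩
    rw [if_pos (by omega : (1:ℕ) ≤ a' + 1 + 1), if_pos (by omega : (1:ℕ) ≤ a' + 1)]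
    simp only [Nat.add_sub_cancel]
    have heq : (M (a' + 1) b (c + 1) e : MvPolynomial (Fin 4) k) - M a' (b + 1) c (e + 1)
        = M a' b c e * (X 0 * X 2 - X 1 * X 3) := by unfold M; ring
    rw [heq]
    exact I_le_J _ _ (q_span_le_I _ _ (Ideal.mul_mem_left _ _ q_mem_span))

lemma psi_xy_mem (n1 n2 : ℕ) (i j : ℕ) (hij : i + j = n1) (a b c e : ℕ) :
    psi ((M a b c e : MvPolynomial (Fin 4) k) * (X 0 ^ i * X 1 ^ j)) ∈ Jdl k n1 n2 := by
  have heq : (M a b c e : MvPolynomial (Fin 4) k) * (X 0 ^ i * X 1 ^ j)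
      = M (a + i) (b + j) c e := by unfold M; ring
  rw [heq, psi_M]
  by_cases h : 1 ≤ a + i
  · rw [if_pos h]
    exact P1'_le_J n1 n2 (M_mem_P1_pow (by omega) _ _)
  · rw [if_neg h]
    by_cases h2 : 1 ≤ b + j ∧ 1 ≤ e
    · rw [if_pos h2]
      obtain ⟨h21, h22⟩ := h2
      exact P1'_le_J n1 n2 (M_mem_P1_pow (by omega) _ _)
    · rw [if_neg h2]; exact zero_mem _

lemma psi_zw_mem (n1 n2 : ℕ) (i j : ℕ) (hij : i + j = n2) (a b c e : ℕ) :
    psi ((M a b c e : MvPolynomial (Fin 4) k) * (X 2 ^ i * X 3 ^ j)) ∈ Jdl k n1 n2 := by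
  have heq : (M a b c e : MvPolynomial (Fin 4) k) * (X 2 ^ i * X 3 ^ j)
      = M a b (c + i) (e + j) := by unfold M; ring
  rw [heq, psi_M]
  by_cases h : 1 ≤ a
  · rw [if_pos h]
    exact I_le_J _ _ (P2_le_I _ _ (M_mem_P2_pow (by omega) _ _))
  · rw [if_neg h]
    by_cases h2 : 1 ≤ b ∧ 1 ≤ e + j
    · rw [if_pos h2]
      obtain ⟨h21, h22⟩ := h2
      exact I_le_J _ _ (P2_le_I _ _ (M_mem_P2_pow (by omega) _ _))
    · rw [if_neg h2]; exact zero_mem _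

lemma psi'_q_mem (n1 n2 : ℕ) (a b c e : ℕ) :
    psi' ((M a b c e : MvPolynomial (Fin 4) k) * (X 0 * X 2 - X 1 * X 3)) ∈ Jdl k n1 n2 := by
  rw [M_mul_q, map_sub, psi'_M, psi'_M]
  rcases Nat.eq_zero_or_pos b with rfl | hb
  · rw [if_neg (by omega : ¬ (1:ℕ) ≤ 0), if_pos (⟨by omega, by omega⟩ : (1:ℕ) ≤ a + 1 ∧ (1:ℕ) ≤ c + 1),
      if_pos (by omega : (1:ℕ) ≤ 0 + 1)]
    simp only [Nat.add_sub_cancel, sub_self]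
    exact zero_mem _
  · obtain ⟨b', rfl⟩ : ∃ b', b = b' + 1 := ⟨b - 1, by omega⟩
    rw [if_pos (by omega : (1:ℕ) ≤ b' + 1), if_pos (by omega : (1:ℕ) ≤ b' + 1 + 1)]
    simp only [Nat.add_sub_cancel]
    have heq : (M (a + 1) b' (c + 1) e : MvPolynomial (Fin 4) k) - M a (b' + 1) c (e + 1)
        = M a b' c e * (X 0 * X 2 - X 1 * X 3) := by unfold M; ring
    rw [heq]
    exact I_le_J _ _ (q_span_le_I _ _ (Ideal.mul_mem_left _ _ q_mem_span))

lemma psi'_xy_mem (n1 n2 : ℕ) (i j : ℕ) (hij : i + j = n1) (a b c e : ℕ) :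
    psi' ((M a b c e : MvPolynomial (Fin 4) k) * (X 0 ^ i * X 1 ^ j)) ∈ Jdl k n1 n2 := by
  have heq : (M a b c e : MvPolynomial (Fin 4) k) * (X 0 ^ i * X 1 ^ j)
      = M (a + i) (b + j) c e := by unfold M; ring
  rw [heq, psi'_M]
  by_cases h : 1 ≤ b + j
  · rw [if_pos h]
    exact P1'_le_J n1 n2 (M_mem_P1_pow (by omega) _ _)
  · rw [if_neg h]
    by_cases h2 : 1 ≤ a + i ∧ 1 ≤ c
    · rw [if_pos h2]
      obtain ⟨h21, h22⟩ := h2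
      exact P1'_le_J n1 n2 (M_mem_P1_pow (by omega) _ _)
    · rw [if_neg h2]; exact zero_mem _

lemma psi'_zw_mem (n1 n2 : ℕ) (i j : ℕ) (hij : i + j = n2) (a b c e : ℕ) :
    psi' ((M a b c e : MvPolynomial (Fin 4) k) * (X 2 ^ i * X 3 ^ j)) ∈ Jdl k n1 n2 := by
  have heq : (M a b c e : MvPolynomial (Fin 4) k) * (X 2 ^ i * X 3 ^ j)
      = M a b (c + i) (e + j) := by unfold M; ring
  rw [heq, psi'_M]
  by_cases h : 1 ≤ b
  · rw [if_pos h]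
    exact I_le_J _ _ (P2_le_I _ _ (M_mem_P2_pow (by omega) _ _))
  · rw [if_neg h]
    by_cases h2 : 1 ≤ a ∧ 1 ≤ c + i
    · rw [if_pos h2]
      obtain ⟨h21, h22⟩ := h2
      exact I_le_J _ _ (P2_le_I _ _ (M_mem_P2_pow (by omega) _ _))
    · rw [if_neg h2]; exact zero_mem _

/-! ### Lifting to the whole ideal -/

lemma mul_mem_of_M (L : MvPolynomial (Fin 4) k →ₗ[k] MvPolynomial (Fin 4) k)
    (J : Ideal (MvPolynomial (Fin 4) k)) (t : MvPolynomial (Fin 4) k)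
    (ht : ∀ a b c e : ℕ, L (M a b c e * t) ∈ J) (r : MvPolynomial (Fin 4) k) :
    L (r * t) ∈ J := by
  induction r using MvPolynomial.induction_on' with
  | monomial u a =>
    have h : (monomial u a : MvPolynomial (Fin 4) k) * t
        = a • (M (u 0) (u 1) (u 2) (u 3) * t) := by
      rw [monomial_eq_smul_M, smul_mul_assoc]
    rw [h, map_smul, smul_eq_C_mul]
    exact Ideal.mul_mem_left _ _ (ht _ _ _ _)
  | add p q hp hq => rw [add_mul, map_add]; exact add_mem hp hq

lemma span_image_mem (L : MvPolynomial (Fin 4) k →ₗ[k] MvPolynomial (Fin 4) k)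
    (J : Ideal (MvPolynomial (Fin 4) k)) (s : Set (MvPolynomial (Fin 4) k))
    (hs : ∀ t ∈ s, ∀ r, L (r * t) ∈ J) {p : MvPolynomial (Fin 4) k}
    (hp : p ∈ Ideal.span s) : L p ∈ J := by
  obtain ⟨n, f, g, rfl⟩ := Submodule.mem_span_set'.mp hp
  rw [map_sum]
  refine Submodule.sum_mem _ fun i _ => ?_
  have h := hs (g i) (g i).2 (f i)
  rwa [smul_eq_mul]

/-- monomial generators of `(x,y)^n` -/
def Sxy (n : ℕ) : Set (MvPolynomial (Fin 4) k) :=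
  {p | ∃ i j, i + j = n ∧ p = X 0 ^ i * X 1 ^ j}

/-- monomial generators of `(z,w)^n` -/
def Szw (n : ℕ) : Set (MvPolynomial (Fin 4) k) :=
  {p | ∃ i j, i + j = n ∧ p = X 2 ^ i * X 3 ^ j}

lemma pow_le_span_Sxy (n : ℕ) :
    (Ideal.span {(X 0 : MvPolynomial (Fin 4) k), X 1}) ^ n ≤ Ideal.span (Sxy n) := by
  induction n with
  | zero =>
    have h1 : Ideal.span (Sxy (k := k) 0) = ⊤ :=
      (Ideal.eq_top_iff_one _).mpr (Ideal.subset_span ⟨0, 0, rfl, by simp⟩)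
    rw [pow_zero, Ideal.one_eq_top, h1]
  | succ n ih =>
    rw [pow_succ]
    refine le_trans (Ideal.mul_mono ih le_rfl) ?_
    rw [Ideal.span_mul_span]
    refine Ideal.span_le.mpr ?_
    rintro p hp
    simp only [Set.mem_mul] at hp
    obtain ⟨s, ⟨i, j, hij, rfl⟩, t, ht, rfl⟩ := hp
    rcases ht with rfl | rfl
    · exact Ideal.subset_span ⟨i + 1, j, by omega, by ring⟩
    · exact Ideal.subset_span ⟨i, j + 1, by omega, by ring⟩

lemma pow_le_span_Szw (n : ℕ) :
    (Ideal.span {(X 2 : MvPolynomial (Fin 4) k), X 3}) ^ n ≤ Ideal.span (Szw n) := by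
  induction n with
  | zero =>
    have h1 : Ideal.span (Szw (k := k) 0) = ⊤ :=
      (Ideal.eq_top_iff_one _).mpr (Ideal.subset_span ⟨0, 0, rfl, by simp⟩)
    rw [pow_zero, Ideal.one_eq_top, h1]
  | succ n ih =>
    rw [pow_succ]
    refine le_trans (Ideal.mul_mono ih le_rfl) ?_
    rw [Ideal.span_mul_span]
    refine Ideal.span_le.mpr ?_
    rintro p hp
    simp only [Set.mem_mul] at hp
    obtain ⟨s, ⟨i, j, hij, rfl⟩, t, ht, rfl⟩ := hp
    rcases ht with rfl | rfl
    · exact Ideal.subset_span ⟨i + 1, j, by omega, by ring⟩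
    · exact Ideal.subset_span ⟨i, j + 1, by omega, by ring⟩

/-- combined generating set of the ideal `I` -/
def genSet (n1 n2 : ℕ) : Set (MvPolynomial (Fin 4) k) :=
  Sxy n1 ∪ Szw n2 ∪ {X 0 * X 2 - X 1 * X 3}

lemma I_le_span_genSet (n1 n2 : ℕ) :
    Idl k n1 n2 ≤ Ideal.span (genSet n1 n2) := by
  rw [Idl, Submodule.add_eq_sup, Submodule.add_eq_sup]
  refine sup_le (sup_le ?_ ?_) ?_
  · exact le_trans (pow_le_span_Sxy n1)
      (Ideal.span_mono ((Set.subset_union_left).trans Set.subset_union_left))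
  · exact le_trans (pow_le_span_Szw n2)
      (Ideal.span_mono ((Set.subset_union_right).trans Set.subset_union_left))
  · exact Ideal.span_mono Set.subset_union_right

lemma psi_I_mem (n1 n2 : ℕ) {p : MvPolynomial (Fin 4) k}
    (hp : p ∈ Idl k n1 n2) : psi p ∈ Jdl k n1 n2 := by
  refine span_image_mem psi (Jdl k n1 n2) (genSet n1 n2) ?_ (I_le_span_genSet n1 n2 hp)
  rintro t ht r
  rcases ht with (⟨i, j, hij, rfl⟩ | ⟨i, j, hij, rfl⟩) | ht
  · exact mul_mem_of_M psi _ _ (fun a b c e => psi_xy_mem n1 n2 i j hij a b c e) r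
  · exact mul_mem_of_M psi _ _ (fun a b c e => psi_zw_mem n1 n2 i j hij a b c e) r
  · rw [Set.mem_singleton_iff] at ht
    subst ht
    exact mul_mem_of_M psi _ _ (fun a b c e => psi_q_mem n1 n2 a b c e) r

lemma psi'_I_mem (n1 n2 : ℕ) {p : MvPolynomial (Fin 4) k}
    (hp : p ∈ Idl k n1 n2) : psi' p ∈ Jdl k n1 n2 := by
  refine span_image_mem psi' (Jdl k n1 n2) (genSet n1 n2) ?_ (I_le_span_genSet n1 n2 hp)
  rintro t ht r
  rcases ht with (⟨i, j, hij, rfl⟩ | ⟨i, j, hij, rfl⟩) | ht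
  · exact mul_mem_of_M psi' _ _ (fun a b c e => psi'_xy_mem n1 n2 i j hij a b c e) r
  · exact mul_mem_of_M psi' _ _ (fun a b c e => psi'_zw_mem n1 n2 i j hij a b c e) r
  · rw [Set.mem_singleton_iff] at ht
    subst ht
    exact mul_mem_of_M psi' _ _ (fun a b c e => psi'_q_mem n1 n2 a b c e) r

lemma mem_J_of_X0_mul (n1 n2 : ℕ) {f : MvPolynomial (Fin 4) k}
    (h : X 0 * f ∈ Idl k n1 n2) : f ∈ Jdl k n1 n2 := by
  have h2 := psi_I_mem n1 n2 h
  rwa [psi_X0_mul] at h2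

lemma mem_J_of_X1_mul (n1 n2 : ℕ) {f : MvPolynomial (Fin 4) k}
    (h : X 1 * f ∈ Idl k n1 n2) : f ∈ Jdl k n1 n2 := by
  have h2 := psi'_I_mem n1 n2 h
  rwa [psi'_X1_mul] at h2

lemma X0_mul_mem_I (n1 n2 : ℕ) (hn1 : 1 ≤ n1) {f : MvPolynomial (Fin 4) k}
    (hf : f ∈ Jdl k n1 n2) : X 0 * f ∈ Idl k n1 n2 := by
  obtain ⟨g, hg, h, hh, rfl⟩ := Submodule.mem_sup.mp hf
  rw [mul_add]
  refine add_mem (Ideal.mul_mem_left _ _ hg) ?_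
  have hx : (X 0 : MvPolynomial (Fin 4) k) ∈ Ideal.span {X 0, X 1} :=
    Ideal.subset_span (by simp)
  have hmem : X 0 * h ∈ ((Ideal.span {X 0, X 1} : Ideal (MvPolynomial (Fin 4) k)) ^ (n1 - 1))
      * Ideal.span {X 0, X 1} := by
    rw [mul_comm (X 0 : MvPolynomial (Fin 4) k) h]
    exact Ideal.mul_mem_mul hh hx
  rw [← pow_succ, (by omega : n1 - 1 + 1 = n1)] at hmem
  exact P1_le_I n1 n2 hmem

lemma X1_mul_mem_I (n1 n2 : ℕ) (hn1 : 1 ≤ n1) {f : MvPolynomial (Fin 4) k}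
    (hf : f ∈ Jdl k n1 n2) : X 1 * f ∈ Idl k n1 n2 := by
  obtain ⟨g, hg, h, hh, rfl⟩ := Submodule.mem_sup.mp hf
  rw [mul_add]
  refine add_mem (Ideal.mul_mem_left _ _ hg) ?_
  have hx : (X 1 : MvPolynomial (Fin 4) k) ∈ Ideal.span {X 0, X 1} :=
    Ideal.subset_span (by simp)
  have hmem : X 1 * h ∈ ((Ideal.span {X 0, X 1} : Ideal (MvPolynomial (Fin 4) k)) ^ (n1 - 1))
      * Ideal.span {X 0, X 1} := by
    rw [mul_comm (X 1 : MvPolynomial (Fin 4) k) h]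
    exact Ideal.mul_mem_mul hh hx
  rw [← pow_succ, (by omega : n1 - 1 + 1 = n1)] at hmem
  exact P1_le_I n1 n2 hmem

end Stmt9Aux

theorem stmt9 (k : Type*) [Field k] (n1 n2 : ℕ) (h1 : 2 ≤ n1) (h2 : 2 ≤ n2)
    (I : Ideal (MvPolynomial (Fin 4) k))
    (hI : I = (Ideal.span {X 0, X 1}) ^ n1 + (Ideal.span {X 2, X 3}) ^ n2
        + Ideal.span {X 0 * X 2 - X 1 * X 3}) :
    ∀ a : MvPolynomial (Fin 4) k ⧸ I,
      Ideal.Quotient.mk I (X 0) * a = 0 ↔ Ideal.Quotient.mk I (X 1) * a = 0 := by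
  intro a
  obtain ⟨f, rfl⟩ := Ideal.Quotient.mk_surjective a
  rw [← map_mul, ← map_mul, Ideal.Quotient.eq_zero_iff_mem, Ideal.Quotient.eq_zero_iff_mem]
  have hI' : I = Stmt9Aux.Idl k n1 n2 := hI
  rw [hI']
  have hn1 : 1 ≤ n1 := by omega
  constructor
  · intro h
    exact Stmt9Aux.X1_mul_mem_I n1 n2 hn1 (Stmt9Aux.mem_J_of_X0_mul n1 n2 h)
  · intro h
    exact Stmt9Aux.X0_mul_mem_I n1 n2 hn1 (Stmt9Aux.mem_J_of_X1_mul n1 n2 h)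
end

section
/- Let $k$ be a field of characteristic 0, $S = k[x,y,z,w]$, $n_1, n_2 \ge 2$, $I = (x,y)^{n_1} + (z,w)^{n_2} + (xz-yw)$, and $A = S/I$. The socle of $A$ (the annihilator of the maximal ideal $\mathfrak{m}_A = (x,y,z,w)/I$) equals the $k$-span of the images of the monomials of bidegree $(n_1-1, n_2-1)$, i.e. those $x^{u_1}y^{u_2}z^{u_3}w^{u_4}$ with $u_1+u_2 = n_1-1$ and $u_3+u_4 = n_2-1$. In particular, $\mathrm{Soc}\, A = A_{n_1+n_2-2}$, the degree-$(n_1+n_2-2)$ graded piece of $A$. -/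
open MvPolynomial Pointwise

namespace Stmt10Aux

variable {k : Type*} [Field k]

abbrev D := Fin 4 →₀ ℕ
abbrev R (k : Type*) [Field k] := MvPolynomial (Fin 4) k

noncomputable def mk4 (a b c d : ℕ) : D :=
  Finsupp.single 0 a + Finsupp.single 1 b + Finsupp.single 2 c + Finsupp.single 3 d

@[simp] lemma mk4_apply0 (a b c d : ℕ) : mk4 a b c d 0 = a := by
  simp [mk4, Finsupp.single_apply]
@[simp] lemma mk4_apply1 (a b c d : ℕ) : mk4 a b c d 1 = b := by
  simp [mk4, Finsupp.single_apply]
@[simp] lemma mk4_apply2 (a b c d : ℕ) : mk4 a b c d 2 = c := by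
  simp [mk4, Finsupp.single_apply]
@[simp] lemma mk4_apply3 (a b c d : ℕ) : mk4 a b c d 3 = d := by
  simp [mk4, Finsupp.single_apply]

lemma fin4_cases (i : Fin 4) : i = 0 ∨ i = 1 ∨ i = 2 ∨ i = 3 := by omega

lemma eq_mk4 (μ : D) : μ = mk4 (μ 0) (μ 1) (μ 2) (μ 3) := by
  ext i
  rcases fin4_cases i with h | h | h | h <;> subst h <;> simp

lemma ext4 {μ ν : D} (h0 : μ 0 = ν 0) (h1 : μ 1 = ν 1) (h2 : μ 2 = ν 2)
    (h3 : μ 3 = ν 3) : μ = ν := by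
  ext i
  rcases fin4_cases i with h | h | h | h <;> subst h <;> assumption

lemma mk4_add (a b c d a' b' c' d' : ℕ) :
    mk4 a b c d + mk4 a' b' c' d' = mk4 (a + a') (b + b') (c + c') (d + d') := by
  apply ext4 <;> simp

lemma degree4 (d : D) : d.degree = d 0 + d 1 + d 2 + d 3 := by
  rw [Finsupp.degree_apply, Finset.sum_subset (Finset.subset_univ d.support)
    (fun i _ hi => Finsupp.notMem_support_iff.mp hi), Fin.sum_univ_four]

/-- normal form of an exponent vector under the rewrite xz → yw -/
noncomputable def red (d : D) : D :=
  mk4 (d 0 - min (d 0) (d 2)) (d 1 + min (d 0) (d 2))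
      (d 2 - min (d 0) (d 2)) (d 3 + min (d 0) (d 2))

@[simp] lemma red_apply0 (d : D) : red d 0 = d 0 - min (d 0) (d 2) := by simp [red]
@[simp] lemma red_apply1 (d : D) : red d 1 = d 1 + min (d 0) (d 2) := by simp [red]
@[simp] lemma red_apply2 (d : D) : red d 2 = d 2 - min (d 0) (d 2) := by simp [red]
@[simp] lemma red_apply3 (d : D) : red d 3 = d 3 + min (d 0) (d 2) := by simp [red]

lemma prod_X_pow (a b c d : ℕ) :
    (X 0 : R k) ^ a * X 1 ^ b * X 2 ^ c * X 3 ^ d = monomial (mk4 a b c d) 1 := by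
  simp [X_pow_eq_monomial, monomial_mul, mk4]

section Main

variable (n1 n2 : ℕ)

noncomputable def J (k : Type*) [Field k] (n1 n2 : ℕ) : Ideal (R k) :=
  (Ideal.span {X 0, X 1}) ^ n1 + (Ideal.span {X 2, X 3}) ^ n2
    + Ideal.span {X 0 * X 2 - X 1 * X 3}

/-- the reduction operator -/
noncomputable def F (p : R k) : R k :=
  ∑ d ∈ p.support,
    if d 0 + d 1 < n1 ∧ d 2 + d 3 < n2 then monomial (red d) (coeff d p) else 0

lemma F_eq_on {p : R k} {s : Finset D} (hs : p.support ⊆ s) :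
    F n1 n2 p = ∑ d ∈ s,
      if d 0 + d 1 < n1 ∧ d 2 + d 3 < n2 then monomial (red d) (coeff d p) else 0 := by
  refine Finset.sum_subset hs fun d _ hd => ?_
  rw [notMem_support_iff.mp hd]
  simp

lemma F_monomial (d : D) (c : k) :
    F n1 n2 (monomial d c)
      = if d 0 + d 1 < n1 ∧ d 2 + d 3 < n2 then monomial (red d) c else 0 := by
  rw [F_eq_on n1 n2 (support_monomial_subset (s := d) (a := c))]
  simp [coeff_monomial]

lemma F_add (p q : R k) : F n1 n2 (p + q) = F n1 n2 p + F n1 n2 q := by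
  classical
  set s := (p + q).support ∪ p.support ∪ q.support with hs
  rw [F_eq_on n1 n2 (s := s) (by intro x hx; simp [hs, hx]),
      F_eq_on n1 n2 (s := s) (p := p) (by intro x hx; simp [hs, hx]),
      F_eq_on n1 n2 (s := s) (p := q) (by intro x hx; simp [hs, hx]),
      ← Finset.sum_add_distrib]
  refine Finset.sum_congr rfl fun d _ => ?_
  by_cases h : d 0 + d 1 < n1 ∧ d 2 + d 3 < n2 <;> simp [h, coeff_add]

@[simp] lemma F_zero : F n1 n2 (0 : R k) = 0 := by simp [F]

lemma F_sub (p q : R k) : F n1 n2 (p - q) = F n1 n2 p - F n1 n2 q := by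
  have h := F_add n1 n2 (p - q) q
  rw [sub_add_cancel] at h
  rw [h]; ring

lemma F_sum {ι : Type*} (s : Finset ι) (f : ι → R k) :
    F n1 n2 (∑ i ∈ s, f i) = ∑ i ∈ s, F n1 n2 (f i) := by
  classical
  induction s using Finset.induction with
  | empty => simp
  | @insert a s h ih => rw [Finset.sum_insert h, Finset.sum_insert h, F_add, ih]

lemma coeff_F (p : R k) (μ : D) :
    coeff μ (F n1 n2 p)
      = ∑ d ∈ p.support,
          if (d 0 + d 1 < n1 ∧ d 2 + d 3 < n2) ∧ red d = μ then coeff d p else 0 := by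
  rw [F, coeff_sum]
  refine Finset.sum_congr rfl fun d _ => ?_
  by_cases h : d 0 + d 1 < n1 ∧ d 2 + d 3 < n2 <;>
    by_cases h2 : red d = μ <;> simp [h, h2, coeff_monomial]

lemma F_high {p : R k} (h : ∀ d ∈ p.support, n1 ≤ d 0 + d 1 ∨ n2 ≤ d 2 + d 3) :
    F n1 n2 p = 0 := by
  refine Finset.sum_eq_zero fun d hd => ?_
  rcases h d hd with h' | h' <;> rw [if_neg (by omega)]

lemma support_mul_monomial {p : R k} {e d : D} {c : k}
    (hd : d ∈ (p * monomial e c).support) : ∀ i, e i ≤ d i := by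
  intro i
  have h : coeff d (p * monomial e c) ≠ 0 := mem_support_iff.mp hd
  rw [coeff_mul_monomial'] at h
  by_contra hc
  exact h (if_neg fun hle => hc (Finsupp.le_def.mp hle i))

lemma F_mul_power1 (r : R k) (a b : ℕ) (h : n1 ≤ a + b) :
    F n1 n2 (r * (X 0 ^ a * X 1 ^ b)) = 0 := by
  refine F_high n1 n2 fun d hd => Or.inl ?_
  rw [show (X 0 : R k) ^ a * X 1 ^ b = monomial (mk4 a b 0 0) 1 from by
        simpa using prod_X_pow (k := k) a b 0 0] at hd
  have h0 := support_mul_monomial hd 0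
  have h1 := support_mul_monomial hd 1
  simp at h0 h1
  omega

lemma F_mul_power2 (r : R k) (a b : ℕ) (h : n2 ≤ a + b) :
    F n1 n2 (r * (X 2 ^ a * X 3 ^ b)) = 0 := by
  refine F_high n1 n2 fun d hd => Or.inr ?_
  rw [show (X 2 : R k) ^ a * X 3 ^ b = monomial (mk4 0 0 a b) 1 from by
        simpa using prod_X_pow (k := k) 0 0 a b] at hd
  have h2' := support_mul_monomial hd 2
  have h3' := support_mul_monomial hd 3
  simp at h2' h3'
  omega

lemma F_rel (r : R k) :
    F n1 n2 (r * (X 0 * X 2)) = F n1 n2 (r * (X 1 * X 3)) := by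
  induction r using MvPolynomial.induction_on' with
  | add p q ihp ihq => rw [add_mul, add_mul, F_add, F_add, ihp, ihq]
  | monomial d c =>
    rw [show (X 0 : R k) * X 2 = monomial (mk4 1 0 1 0) 1 from by
          simpa using prod_X_pow (k := k) 1 0 1 0,
        show (X 1 : R k) * X 3 = monomial (mk4 0 1 0 1) 1 from by
          simpa using prod_X_pow (k := k) 0 1 0 1,
        monomial_mul, monomial_mul, mul_one, F_monomial, F_monomial]
    have e1 : red (d + mk4 1 0 1 0) = red (d + mk4 0 1 0 1) := by
      apply ext4 <;> simp [Finsupp.add_apply] <;> omega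
    by_cases hcond : d 0 + d 1 + 1 < n1 ∧ d 2 + d 3 + 1 < n2
    · rw [if_pos (by simp [Finsupp.add_apply]; omega),
          if_pos (by simp [Finsupp.add_apply]; omega), e1]
    · rw [if_neg (by simp [Finsupp.add_apply]; omega),
          if_neg (by simp [Finsupp.add_apply]; omega)]

lemma mem_setpow1 {g : R k} {n : ℕ} (h : g ∈ ({X 0, X 1} : Set (R k)) ^ n) :
    ∃ a b, a + b = n ∧ g = X 0 ^ a * X 1 ^ b := by
  induction n generalizing g with
  | zero => exact ⟨0, 0, rfl, by simpa using h⟩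
  | succ n ih =>
    rw [pow_succ] at h
    obtain ⟨u, hu, v, hv, rfl⟩ := Set.mem_mul.mp h
    obtain ⟨a, b, hab, rfl⟩ := ih hu
    rcases hv with hv | hv <;> subst hv
    · exact ⟨a + 1, b, by omega, by ring⟩
    · exact ⟨a, b + 1, by omega, by ring⟩

lemma mem_setpow2 {g : R k} {n : ℕ} (h : g ∈ ({X 2, X 3} : Set (R k)) ^ n) :
    ∃ a b, a + b = n ∧ g = X 2 ^ a * X 3 ^ b := by
  induction n generalizing g with
  | zero => exact ⟨0, 0, rfl, by simpa using h⟩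
  | succ n ih =>
    rw [pow_succ] at h
    obtain ⟨u, hu, v, hv, rfl⟩ := Set.mem_mul.mp h
    obtain ⟨a, b, hab, rfl⟩ := ih hu
    rcases hv with hv | hv <;> subst hv
    · exact ⟨a + 1, b, by omega, by ring⟩
    · exact ⟨a, b + 1, by omega, by ring⟩

lemma F_J {q : R k} (hq : q ∈ J k n1 n2) : F n1 n2 q = 0 := by
  rw [J, Submodule.add_eq_sup, Submodule.add_eq_sup] at hq
  obtain ⟨u, hu, w, hw, rfl⟩ := Submodule.mem_sup.mp hq
  obtain ⟨u1, hu1, u2, hu2, rfl⟩ := Submodule.mem_sup.mp hu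
  have key1 : ∀ g ∈ (Ideal.span ({X 0, X 1} : Set (R k))) ^ n1,
      ∀ r : R k, F n1 n2 (r * g) = 0 := by
    have hspan : (Ideal.span ({X 0, X 1} : Set (R k))) ^ n1
        = Ideal.span (({X 0, X 1} : Set (R k)) ^ n1) := Submodule.span_pow _ n1
    rw [hspan]
    intro g hg
    refine Submodule.span_induction (fun g hg r => ?_) (fun r => by simp) ?_ ?_ hg
    · obtain ⟨a, b, hab, rfl⟩ := mem_setpow1 hg
      exact F_mul_power1 n1 n2 r a b (le_of_eq hab.symm)
    · intro x y _ _ hx hy r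
      rw [mul_add, F_add, hx, hy, add_zero]
    · intro a x _ hx r
      rw [smul_eq_mul, ← mul_assoc]
      exact hx (r * a)
  have key2 : ∀ g ∈ (Ideal.span ({X 2, X 3} : Set (R k))) ^ n2,
      ∀ r : R k, F n1 n2 (r * g) = 0 := by
    have hspan : (Ideal.span ({X 2, X 3} : Set (R k))) ^ n2
        = Ideal.span (({X 2, X 3} : Set (R k)) ^ n2) := Submodule.span_pow _ n2
    rw [hspan]
    intro g hg
    refine Submodule.span_induction (fun g hg r => ?_) (fun r => by simp) ?_ ?_ hg
    · obtain ⟨a, b, hab, rfl⟩ := mem_setpow2 hg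
      exact F_mul_power2 n1 n2 r a b (le_of_eq hab.symm)
    · intro x y _ _ hx hy r
      rw [mul_add, F_add, hx, hy, add_zero]
    · intro a x _ hx r
      rw [smul_eq_mul, ← mul_assoc]
      exact hx (r * a)
  have z1 : F n1 n2 u1 = 0 := by simpa using key1 u1 hu1 1
  have z2 : F n1 n2 u2 = 0 := by simpa using key2 u2 hu2 1
  have z3 : F n1 n2 w = 0 := by
    obtain ⟨r, rfl⟩ := Ideal.mem_span_singleton'.mp hw
    rw [mul_sub, F_sub, F_rel, sub_self]
  rw [F_add, F_add, z1, z2, z3, add_zero, add_zero]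

lemma leJ1 : (Ideal.span ({X 0, X 1} : Set (R k))) ^ n1 ≤ J k n1 n2 := by
  rw [J, Submodule.add_eq_sup, Submodule.add_eq_sup]
  exact le_trans le_sup_left le_sup_left

lemma leJ2 : (Ideal.span ({X 2, X 3} : Set (R k))) ^ n2 ≤ J k n1 n2 := by
  rw [J, Submodule.add_eq_sup, Submodule.add_eq_sup]
  exact le_trans le_sup_right le_sup_left

lemma leJ3 : Ideal.span ({X 0 * X 2 - X 1 * X 3} : Set (R k)) ≤ J k n1 n2 := by
  rw [J, Submodule.add_eq_sup, Submodule.add_eq_sup]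
  exact le_sup_right

lemma pow_pow_mem1 (a b : ℕ) (h : n1 ≤ a + b) :
    (X 0 : R k) ^ a * X 1 ^ b ∈ (Ideal.span ({X 0, X 1} : Set (R k))) ^ n1 := by
  refine Ideal.pow_le_pow_right h ?_
  rw [pow_add]
  exact Ideal.mul_mem_mul (Ideal.pow_mem_pow (Ideal.subset_span (by simp)) a)
    (Ideal.pow_mem_pow (Ideal.subset_span (by simp)) b)

lemma pow_pow_mem2 (a b : ℕ) (h : n2 ≤ a + b) :
    (X 2 : R k) ^ a * X 3 ^ b ∈ (Ideal.span ({X 2, X 3} : Set (R k))) ^ n2 := by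
  refine Ideal.pow_le_pow_right h ?_
  rw [pow_add]
  exact Ideal.mul_mem_mul (Ideal.pow_mem_pow (Ideal.subset_span (by simp)) a)
    (Ideal.pow_mem_pow (Ideal.subset_span (by simp)) b)

lemma mem_J_high (d : D) (c : k) (h : n1 ≤ d 0 + d 1 ∨ n2 ≤ d 2 + d 3) :
    monomial d c ∈ J k n1 n2 := by
  rcases h with h | h
  · have hd : monomial d c
        = monomial (mk4 0 0 (d 2) (d 3)) c * (X 0 ^ (d 0) * X 1 ^ (d 1)) := by
      rw [show (X 0 : R k) ^ (d 0) * X 1 ^ (d 1) = monomial (mk4 (d 0) (d 1) 0 0) 1 from by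
            simpa using prod_X_pow (k := k) (d 0) (d 1) 0 0,
          monomial_mul, mul_one, mk4_add,
          show mk4 (0 + d 0) (0 + d 1) (d 2 + 0) (d 3 + 0) = d from
            ext4 (by simp) (by simp) (by simp) (by simp)]
    rw [hd]
    exact Ideal.mul_mem_left _ _ (leJ1 n1 n2 (pow_pow_mem1 n1 _ _ h))
  · have hd : monomial d c
        = monomial (mk4 (d 0) (d 1) 0 0) c * (X 2 ^ (d 2) * X 3 ^ (d 3)) := by
      rw [show (X 2 : R k) ^ (d 2) * X 3 ^ (d 3) = monomial (mk4 0 0 (d 2) (d 3)) 1 from by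
            simpa using prod_X_pow (k := k) 0 0 (d 2) (d 3),
          monomial_mul, mul_one, mk4_add,
          show mk4 (d 0 + 0) (d 1 + 0) (0 + d 2) (0 + d 3) = d from
            ext4 (by simp) (by simp) (by simp) (by simp)]
    rw [hd]
    exact Ideal.mul_mem_left _ _ (leJ2 n1 n2 (pow_pow_mem2 n2 _ _ h))

lemma sub_F_mem (p : R k) : p - F n1 n2 p ∈ J k n1 n2 := by
  induction p using MvPolynomial.induction_on' with
  | add p q ihp ihq =>
    rw [F_add, show p + q - (F n1 n2 p + F n1 n2 q)
        = (p - F n1 n2 p) + (q - F n1 n2 q) from by ring]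
    exact Ideal.add_mem _ ihp ihq
  | monomial d c =>
    rw [F_monomial]
    by_cases h : d 0 + d 1 < n1 ∧ d 2 + d 3 < n2
    · rw [if_pos h]
      set m := min (d 0) (d 2) with hm
      have hd : monomial d c
          = monomial (mk4 (d 0 - m) (d 1) (d 2 - m) (d 3)) c * ((X 0 * X 2) ^ m) := by
        rw [show ((X 0 : R k) * X 2) ^ m = monomial (mk4 m 0 m 0) 1 from by
              rw [mul_pow]; simpa using prod_X_pow (k := k) m 0 m 0,
            monomial_mul, mul_one, mk4_add,
            show mk4 (d 0 - m + m) (d 1 + 0) (d 2 - m + m) (d 3 + 0) = d from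
              ext4 (by simp; omega) (by simp) (by simp; omega) (by simp)]
      have hr : monomial (red d) c
          = monomial (mk4 (d 0 - m) (d 1) (d 2 - m) (d 3)) c * ((X 1 * X 3) ^ m) := by
        rw [show ((X 1 : R k) * X 3) ^ m = monomial (mk4 0 m 0 m) 1 from by
              rw [mul_pow]; simpa using prod_X_pow (k := k) 0 m 0 m,
            monomial_mul, mul_one, mk4_add,
            show mk4 (d 0 - m + 0) (d 1 + m) (d 2 - m + 0) (d 3 + m) = red d from
              ext4 (by simp [hm]) (by simp [hm]) (by simp [hm]) (by simp [hm])]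
      rw [hd, hr, ← mul_sub]
      refine Ideal.mul_mem_left _ _ (leJ3 n1 n2 ?_)
      exact Ideal.mem_span_singleton.mpr (sub_dvd_pow_sub_pow _ _ m)
    · rw [if_neg h, sub_zero]
      exact mem_J_high n1 n2 d c (by omega)

lemma supp_F {p : R k} {μ : D} (hμ : μ ∈ (F n1 n2 p).support) :
    min (μ 0) (μ 2) = 0 ∧ μ 0 + μ 1 < n1 ∧ μ 2 + μ 3 < n2 := by
  have h : coeff μ (F n1 n2 p) ≠ 0 := mem_support_iff.mp hμ
  rw [coeff_F] at h
  obtain ⟨d, _, hne⟩ := Finset.exists_ne_zero_of_sum_ne_zero h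
  by_cases hc : (d 0 + d 1 < n1 ∧ d 2 + d 3 < n2) ∧ red d = μ
  · obtain ⟨⟨hc1, hc2⟩, rfl⟩ := hc
    refine ⟨by simp; omega, by simp; omega, by simp; omega⟩
  · exact absurd (if_neg hc) hne

lemma red_inj0 {ν μ : D} (hν : min (ν 0) (ν 2) = 0) (hμ : min (μ 0) (μ 2) = 0)
    (h : red (ν + mk4 1 0 0 0) = red (μ + mk4 1 0 0 0)) : ν = μ := by
  have e0 := congrArg (fun f : D => f 0) h
  have e1 := congrArg (fun f : D => f 1) h
  have e2 := congrArg (fun f : D => f 2) h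
  have e3 := congrArg (fun f : D => f 3) h
  simp [Finsupp.add_apply] at e0 e1 e2 e3
  apply ext4 <;> omega

lemma red_inj2 {ν μ : D} (hν : min (ν 0) (ν 2) = 0) (hμ : min (μ 0) (μ 2) = 0)
    (h : red (ν + mk4 0 0 1 0) = red (μ + mk4 0 0 1 0)) : ν = μ := by
  have e0 := congrArg (fun f : D => f 0) h
  have e1 := congrArg (fun f : D => f 1) h
  have e2 := congrArg (fun f : D => f 2) h
  have e3 := congrArg (fun f : D => f 3) h
  simp [Finsupp.add_apply] at e0 e1 e2 e3
  apply ext4 <;> omega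

lemma key0 {q : R k}
    (hq : ∀ μ ∈ q.support, min (μ 0) (μ 2) = 0 ∧ μ 0 + μ 1 < n1 ∧ μ 2 + μ 3 < n2)
    (h0 : F n1 n2 (X 0 * q) = 0) : ∀ μ ∈ q.support, μ 0 + μ 1 = n1 - 1 := by
  intro μ hμ
  obtain ⟨hmin, hb1, hb2⟩ := hq μ hμ
  by_contra hne
  have hlt : μ 0 + μ 1 + 1 < n1 := by omega
  have hXq : X 0 * q = ∑ ν ∈ q.support, monomial (ν + mk4 1 0 0 0) (coeff ν q) := by
    conv_lhs => rw [as_sum q]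
    rw [Finset.mul_sum]
    refine Finset.sum_congr rfl fun ν _ => ?_
    rw [show (X 0 : R k) = monomial (mk4 1 0 0 0) 1 from by
          simpa using prod_X_pow (k := k) 1 0 0 0,
        monomial_mul, one_mul, add_comm]
  have hco : coeff (red (μ + mk4 1 0 0 0)) (F n1 n2 (X 0 * q)) = coeff μ q := by
    rw [hXq, F_sum, coeff_sum, Finset.sum_eq_single_of_mem μ hμ]
    · rw [F_monomial, if_pos (by constructor <;> simp [Finsupp.add_apply] <;> omega),
        coeff_monomial, if_pos rfl]
    · intro ν hν hne'
      rw [F_monomial]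
      by_cases hc : (ν + mk4 1 0 0 0) 0 + (ν + mk4 1 0 0 0) 1 < n1 ∧
          (ν + mk4 1 0 0 0) 2 + (ν + mk4 1 0 0 0) 3 < n2
      · rw [if_pos hc, coeff_monomial, if_neg]
        intro hEq
        exact hne' (red_inj0 (hq ν hν).1 hmin hEq)
      · rw [if_neg hc, coeff_zero]
  rw [h0, coeff_zero] at hco
  exact mem_support_iff.mp hμ hco.symm

lemma key2 {q : R k}
    (hq : ∀ μ ∈ q.support, min (μ 0) (μ 2) = 0 ∧ μ 0 + μ 1 < n1 ∧ μ 2 + μ 3 < n2)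
    (h2 : F n1 n2 (X 2 * q) = 0) : ∀ μ ∈ q.support, μ 2 + μ 3 = n2 - 1 := by
  intro μ hμ
  obtain ⟨hmin, hb1, hb2⟩ := hq μ hμ
  by_contra hne
  have hlt : μ 2 + μ 3 + 1 < n2 := by omega
  have hXq : X 2 * q = ∑ ν ∈ q.support, monomial (ν + mk4 0 0 1 0) (coeff ν q) := by
    conv_lhs => rw [as_sum q]
    rw [Finset.mul_sum]
    refine Finset.sum_congr rfl fun ν _ => ?_
    rw [show (X 2 : R k) = monomial (mk4 0 0 1 0) 1 from by
          simpa using prod_X_pow (k := k) 0 0 1 0,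
        monomial_mul, one_mul, add_comm]
  have hco : coeff (red (μ + mk4 0 0 1 0)) (F n1 n2 (X 2 * q)) = coeff μ q := by
    rw [hXq, F_sum, coeff_sum, Finset.sum_eq_single_of_mem μ hμ]
    · rw [F_monomial, if_pos (by constructor <;> simp [Finsupp.add_apply] <;> omega),
        coeff_monomial, if_pos rfl]
    · intro ν hν hne'
      rw [F_monomial]
      by_cases hc : (ν + mk4 0 0 1 0) 0 + (ν + mk4 0 0 1 0) 1 < n1 ∧
          (ν + mk4 0 0 1 0) 2 + (ν + mk4 0 0 1 0) 3 < n2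
      · rw [if_pos hc, coeff_monomial, if_neg]
        intro hEq
        exact hne' (red_inj2 (hq ν hν).1 hmin hEq)
      · rw [if_neg hc, coeff_zero]
  rw [h2, coeff_zero] at hco
  exact mem_support_iff.mp hμ hco.symm

end Main

set_option maxHeartbeats 1000000 in
theorem main (k : Type*) [Field k] (n1 n2 : ℕ) (h1 : 2 ≤ n1) (h2 : 2 ≤ n2) :
    ({a : MvPolynomial (Fin 4) k ⧸ J k n1 n2 |
        Ideal.Quotient.mk (J k n1 n2) (X 0) * a = 0 ∧
        Ideal.Quotient.mk (J k n1 n2) (X 1) * a = 0 ∧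
        Ideal.Quotient.mk (J k n1 n2) (X 2) * a = 0 ∧
        Ideal.Quotient.mk (J k n1 n2) (X 3) * a = 0}
      = ↑(Submodule.span k {a : MvPolynomial (Fin 4) k ⧸ J k n1 n2 |
          ∃ u1 u2 u3 u4 : ℕ, u1 + u2 = n1 - 1 ∧ u3 + u4 = n2 - 1 ∧
            a = Ideal.Quotient.mk (J k n1 n2) (X 0 ^ u1 * X 1 ^ u2 * X 2 ^ u3 * X 3 ^ u4)})) ∧
    ({a : MvPolynomial (Fin 4) k ⧸ J k n1 n2 |
        Ideal.Quotient.mk (J k n1 n2) (X 0) * a = 0 ∧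
        Ideal.Quotient.mk (J k n1 n2) (X 1) * a = 0 ∧
        Ideal.Quotient.mk (J k n1 n2) (X 2) * a = 0 ∧
        Ideal.Quotient.mk (J k n1 n2) (X 3) * a = 0}
      = Ideal.Quotient.mk (J k n1 n2) ''
          ↑(homogeneousSubmodule (Fin 4) k (n1 + n2 - 2))) := by
  classical
  set T : Set (MvPolynomial (Fin 4) k ⧸ J k n1 n2) :=
    {a | ∃ u1 u2 u3 u4 : ℕ, u1 + u2 = n1 - 1 ∧ u3 + u4 = n2 - 1 ∧
      a = Ideal.Quotient.mk (J k n1 n2) (X 0 ^ u1 * X 1 ^ u2 * X 2 ^ u3 * X 3 ^ u4)} with hT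
  have hsmul : ∀ (c : k) (r : R k), Ideal.Quotient.mk (J k n1 n2) (c • r)
      = c • Ideal.Quotient.mk (J k n1 n2) r := fun c r => by
    rw [← Ideal.Quotient.mkₐ_eq_mk k, map_smul]
  have hgen : ∀ (i : Fin 4) (u1 u2 u3 u4 : ℕ), u1 + u2 = n1 - 1 → u3 + u4 = n2 - 1 →
      X i * (X 0 ^ u1 * X 1 ^ u2 * X 2 ^ u3 * X 3 ^ u4) ∈ J k n1 n2 := by
    intro i u1 u2 u3 u4 e1 e2
    rcases fin4_cases i with h | h | h | h <;> subst h
    · rw [show (X 0 : R k) * (X 0 ^ u1 * X 1 ^ u2 * X 2 ^ u3 * X 3 ^ u4)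
          = X 0 ^ (u1+1) * X 1 ^ u2 * X 2 ^ u3 * X 3 ^ u4 from by ring, prod_X_pow]
      exact mem_J_high n1 n2 _ _ (by simp; omega)
    · rw [show (X 1 : R k) * (X 0 ^ u1 * X 1 ^ u2 * X 2 ^ u3 * X 3 ^ u4)
          = X 0 ^ u1 * X 1 ^ (u2+1) * X 2 ^ u3 * X 3 ^ u4 from by ring, prod_X_pow]
      exact mem_J_high n1 n2 _ _ (by simp; omega)
    · rw [show (X 2 : R k) * (X 0 ^ u1 * X 1 ^ u2 * X 2 ^ u3 * X 3 ^ u4)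
          = X 0 ^ u1 * X 1 ^ u2 * X 2 ^ (u3+1) * X 3 ^ u4 from by ring, prod_X_pow]
      exact mem_J_high n1 n2 _ _ (by simp; omega)
    · rw [show (X 3 : R k) * (X 0 ^ u1 * X 1 ^ u2 * X 2 ^ u3 * X 3 ^ u4)
          = X 0 ^ u1 * X 1 ^ u2 * X 2 ^ u3 * X 3 ^ (u4+1) from by ring, prod_X_pow]
      exact mem_J_high n1 n2 _ _ (by simp; omega)
  have main1 : {a : MvPolynomial (Fin 4) k ⧸ J k n1 n2 |
        Ideal.Quotient.mk (J k n1 n2) (X 0) * a = 0 ∧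
        Ideal.Quotient.mk (J k n1 n2) (X 1) * a = 0 ∧
        Ideal.Quotient.mk (J k n1 n2) (X 2) * a = 0 ∧
        Ideal.Quotient.mk (J k n1 n2) (X 3) * a = 0}
      = ↑(Submodule.span k T) := by
    apply Set.Subset.antisymm
    · rintro a ⟨hx, -, hz, -⟩
      obtain ⟨p, rfl⟩ := Ideal.Quotient.mk_surjective a
      have hxI : X 0 * p ∈ J k n1 n2 := by
        rwa [← map_mul, Ideal.Quotient.eq_zero_iff_mem] at hx
      have hzI : X 2 * p ∈ J k n1 n2 := by
        rwa [← map_mul, Ideal.Quotient.eq_zero_iff_mem] at hz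
      have hpq : p - F n1 n2 p ∈ J k n1 n2 := sub_F_mem n1 n2 p
      have hql : ∀ μ ∈ (F n1 n2 p).support,
          min (μ 0) (μ 2) = 0 ∧ μ 0 + μ 1 < n1 ∧ μ 2 + μ 3 < n2 :=
        fun μ hμ => supp_F n1 n2 hμ
      have hF0 : F n1 n2 (X 0 * F n1 n2 p) = 0 := by
        rw [show X 0 * F n1 n2 p = X 0 * p - X 0 * (p - F n1 n2 p) from by ring,
          F_sub, F_J n1 n2 hxI, F_J n1 n2 (Ideal.mul_mem_left _ _ hpq), sub_self]
      have hF2 : F n1 n2 (X 2 * F n1 n2 p) = 0 := by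
        rw [show X 2 * F n1 n2 p = X 2 * p - X 2 * (p - F n1 n2 p) from by ring,
          F_sub, F_J n1 n2 hzI, F_J n1 n2 (Ideal.mul_mem_left _ _ hpq), sub_self]
      have k0 := key0 n1 n2 hql hF0
      have k2' := key2 n1 n2 hql hF2
      have hmkeq : Ideal.Quotient.mk (J k n1 n2) p
          = Ideal.Quotient.mk (J k n1 n2) (F n1 n2 p) := Ideal.Quotient.eq.mpr hpq
      show Ideal.Quotient.mk (J k n1 n2) p ∈ Submodule.span k T
      rw [hmkeq, as_sum (F n1 n2 p), map_sum]
      refine Submodule.sum_mem _ fun μ hμ => ?_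
      rw [show monomial μ (coeff μ (F n1 n2 p)) = (coeff μ (F n1 n2 p)) • monomial μ (1 : k)
            from by rw [smul_monomial, smul_eq_mul, mul_one], hsmul]
      refine Submodule.smul_mem _ _ (Submodule.subset_span ?_)
      exact ⟨μ 0, μ 1, μ 2, μ 3, k0 μ hμ, k2' μ hμ, by rw [prod_X_pow, ← eq_mk4]⟩
    · have hz : ∀ (i : Fin 4) (a : MvPolynomial (Fin 4) k ⧸ J k n1 n2),
          a ∈ Submodule.span k T → Ideal.Quotient.mk (J k n1 n2) (X i) * a = 0 := by
        intro i a ha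
        refine Submodule.span_induction (fun b hb => ?_) (by simp)
          (fun x y _ _ hx hy => by rw [mul_add, hx, hy, add_zero])
          (fun c x _ hx => by rw [mul_smul_comm, hx, smul_zero]) ha
        obtain ⟨u1, u2, u3, u4, e1, e2, rfl⟩ := hb
        rw [← map_mul, Ideal.Quotient.eq_zero_iff_mem]
        exact hgen i u1 u2 u3 u4 e1 e2
      exact fun a ha => ⟨hz 0 a ha, hz 1 a ha, hz 2 a ha, hz 3 a ha⟩
  have hspanH : Submodule.span k T
      = (homogeneousSubmodule (Fin 4) k (n1 + n2 - 2)).map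
          (Ideal.Quotient.mkₐ k (J k n1 n2)).toLinearMap := by
    apply le_antisymm
    · rw [Submodule.span_le]
      rintro a ⟨u1, u2, u3, u4, e1, e2, rfl⟩
      refine Submodule.mem_map.mpr ⟨X 0 ^ u1 * X 1 ^ u2 * X 2 ^ u3 * X 3 ^ u4, ?_, ?_⟩
      · rw [prod_X_pow]
        exact isHomogeneous_monomial _ (by rw [degree4]; simp; omega)
      · simp [Ideal.Quotient.mkₐ_eq_mk]
    · intro a ha
      obtain ⟨p, hp, rfl⟩ := Submodule.mem_map.mp ha
      have hps : (Ideal.Quotient.mkₐ k (J k n1 n2)).toLinearMap p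
          = Ideal.Quotient.mk (J k n1 n2) p := by simp [Ideal.Quotient.mkₐ_eq_mk]
      rw [hps, as_sum p, map_sum]
      refine Submodule.sum_mem _ fun d hd => ?_
      have hdeg : d.degree = n1 + n2 - 2 := by
        have hph : p.IsHomogeneous (n1 + n2 - 2) := hp
        have h' := hph (mem_support_iff.mp hd)
        rw [Finsupp.degree_eq_weight_one]
        exact h'
      by_cases hc : n1 ≤ d 0 + d 1 ∨ n2 ≤ d 2 + d 3
      · rw [show Ideal.Quotient.mk (J k n1 n2) (monomial d (coeff d p)) = 0 from
            Ideal.Quotient.eq_zero_iff_mem.mpr (mem_J_high n1 n2 _ _ hc)]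
        exact Submodule.zero_mem _
      · push_neg at hc
        rw [degree4] at hdeg
        rw [show monomial d (coeff d p) = (coeff d p) • monomial d (1 : k)
              from by rw [smul_monomial, smul_eq_mul, mul_one], hsmul]
        refine Submodule.smul_mem _ _ (Submodule.subset_span ?_)
        exact ⟨d 0, d 1, d 2, d 3, by omega, by omega, by rw [prod_X_pow, ← eq_mk4]⟩
  refine ⟨main1, main1.trans ?_⟩
  have hfun : ⇑(Ideal.Quotient.mkₐ k (J k n1 n2)).toLinearMap
      = ⇑(Ideal.Quotient.mk (J k n1 n2)) := by
    funext x
    simp [Ideal.Quotient.mkₐ_eq_mk]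
  rw [hspanH, Submodule.map_coe, hfun]

end Stmt10Aux

open Stmt10Aux in
theorem stmt10 (k : Type*) [Field k] [CharZero k] (n1 n2 : ℕ) (h1 : 2 ≤ n1) (h2 : 2 ≤ n2)
    (I : Ideal (MvPolynomial (Fin 4) k))
    (hI : I = (Ideal.span {X 0, X 1}) ^ n1 + (Ideal.span {X 2, X 3}) ^ n2
        + Ideal.span {X 0 * X 2 - X 1 * X 3}) :
    ({a : MvPolynomial (Fin 4) k ⧸ I |
        Ideal.Quotient.mk I (X 0) * a = 0 ∧ Ideal.Quotient.mk I (X 1) * a = 0 ∧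
        Ideal.Quotient.mk I (X 2) * a = 0 ∧ Ideal.Quotient.mk I (X 3) * a = 0}
      = ↑(Submodule.span k {a : MvPolynomial (Fin 4) k ⧸ I |
          ∃ u1 u2 u3 u4 : ℕ, u1 + u2 = n1 - 1 ∧ u3 + u4 = n2 - 1 ∧
            a = Ideal.Quotient.mk I (X 0 ^ u1 * X 1 ^ u2 * X 2 ^ u3 * X 3 ^ u4)})) ∧
    ({a : MvPolynomial (Fin 4) k ⧸ I |
        Ideal.Quotient.mk I (X 0) * a = 0 ∧ Ideal.Quotient.mk I (X 1) * a = 0 ∧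
        Ideal.Quotient.mk I (X 2) * a = 0 ∧ Ideal.Quotient.mk I (X 3) * a = 0}
      = Ideal.Quotient.mk I ''
          ↑(homogeneousSubmodule (Fin 4) k (n1 + n2 - 2))) := by
  subst hI
  exact Stmt10Aux.main k n1 n2 h1 h2
end

section
/- Let $k$ be a field, $S = k[x,y,z,w]$, $n_1, n_2 \ge 2$, $I = (x,y)^{n_1} + (z,w)^{n_2} + (xz-yw)$, and $A = S/I$. For $0 \le i_1 \le n_1 - 2$ and any $i_2$, the multiplication-by-$x$ map $A_{(i_1, i_2)} \to A_{(i_1+1, i_2)}$ between bigraded pieces of $A$ is injective. -/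
/-!
The substitution `x ↦ ac, y ↦ a, z ↦ b, w ↦ bc` maps `k[x,y,z,w]` to `k[a,b,c]` with kernel
`(xz - yw)`: modulo `xz - yw` every monomial reduces to one not divisible by `xz`, and on those
monomials the substitution is injective on exponents. Giving `a, b, c` the bidegrees
`(1,0), (0,1), (0,0)`, it preserves bidegrees and sends `I` into `(a^n₁, b^n₂)`.

If `i₂ ≥ n₂`, then `p ∈ (z,w)^n₂` already. Otherwise the image of `xp` is a bihomogeneous element
of `(a^n₁, b^n₂)` of bidegree `(i₁+1, i₂)` with `i₁+1 < n₁` and `i₂ < n₂`, hence zero. As the image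
`ac` of `x` is a non-zero-divisor, the image of `p` vanishes, so `p ∈ (xz - yw) ⊆ I`.
-/

open MvPolynomial

namespace QuadricCone

variable {R : Type*} [CommRing R]

lemma monomial_eq_fin3 (m : Fin 3 →₀ ℕ) (r : R) :
    monomial m r = C r * X 0 ^ m 0 * X 1 ^ m 1 * X 2 ^ m 2 := by
  rw [monomial_eq, Finsupp.prod_fintype _ _ (fun _ => pow_zero _), Fin.prod_univ_three]
  ring

lemma monomial_eq_fin4 (m : Fin 4 →₀ ℕ) (r : R) :
    monomial m r = C r * X 0 ^ m 0 * X 1 ^ m 1 * X 2 ^ m 2 * X 3 ^ m 3 := by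
  rw [monomial_eq, Finsupp.prod_fintype _ _ (fun _ => pow_zero _), Fin.prod_univ_four]
  ring

variable (R) in
noncomputable def param : Fin 4 → MvPolynomial (Fin 3) R :=
  ![X 0 * X 2, X 0, X 1, X 1 * X 2]

noncomputable def paramExp (m : Fin 4 →₀ ℕ) : Fin 3 →₀ ℕ :=
  Finsupp.equivFunOnFinite.symm ![m 0 + m 1, m 2 + m 3, m 0 + m 3]

@[simp] lemma paramExp_apply_zero (m : Fin 4 →₀ ℕ) : paramExp m 0 = m 0 + m 1 := rfl
@[simp] lemma paramExp_apply_one (m : Fin 4 →₀ ℕ) : paramExp m 1 = m 2 + m 3 := rfl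
@[simp] lemma paramExp_apply_two (m : Fin 4 →₀ ℕ) : paramExp m 2 = m 0 + m 3 := rfl

lemma aeval_param_monomial (m : Fin 4 →₀ ℕ) (r : R) :
    aeval (param R) (monomial m r) = monomial (paramExp m) r := by
  rw [monomial_eq_fin4, monomial_eq_fin3]
  simp only [param, aeval_eq_bind₁, map_mul, map_pow, algHom_C, algebraMap_eq, bind₁_X_right,
    Matrix.cons_val_zero, Matrix.cons_val_one, Matrix.cons_val, paramExp_apply_zero,
    paramExp_apply_one, paramExp_apply_two]
  ring

lemma aeval_param_quadric :
    aeval (param R) (X 0 * X 2 - X 1 * X 3 : MvPolynomial (Fin 4) R) = 0 := by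
  simp only [param, aeval_eq_bind₁, map_sub, map_mul, bind₁_X_right, Matrix.cons_val_zero,
    Matrix.cons_val_one, Matrix.cons_val]
  ring

lemma coeff_aeval_param (q : MvPolynomial (Fin 4) R) (e : Fin 3 →₀ ℕ) :
    coeff e (aeval (param R) q) = ∑ v ∈ q.support, if paramExp v = e then coeff v q else 0 := by
  conv_lhs => rw [as_sum q, map_sum]
  simp only [coeff_sum, aeval_param_monomial, coeff_monomial]

lemma paramExp_injOn :
    Set.InjOn paramExp {v : Fin 4 →₀ ℕ | v 0 = 0 ∨ v 2 = 0} := by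
  intro v (hv : v 0 = 0 ∨ v 2 = 0) m (hm : m 0 = 0 ∨ m 2 = 0) h
  have h0 := congrArg (· 0) h
  have h1 := congrArg (· 1) h
  have h2 := congrArg (· 2) h
  simp only [paramExp_apply_zero, paramExp_apply_one, paramExp_apply_two] at h0 h1 h2
  ext i
  fin_cases i <;> simp only [Fin.zero_eta, Fin.mk_one, Fin.reduceFinMk] <;> omega

lemma eq_zero_of_aeval_param_eq_zero {q : MvPolynomial (Fin 4) R}
    (hq : ∀ v ∈ q.support, v 0 = 0 ∨ v 2 = 0) (h : aeval (param R) q = 0) : q = 0 := by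
  ext m
  by_contra hm
  have hms : m ∈ q.support := mem_support_iff.2 hm
  have key : coeff (paramExp m) (aeval (param R) q) = coeff m q := by
    rw [coeff_aeval_param, Finset.sum_eq_single_of_mem m hms, if_pos rfl]
    intro v hv hvm
    exact if_neg fun he => hvm (paramExp_injOn (hq v hv) (hq m hms) he)
  rw [h, coeff_zero] at key
  exact hm key.symm

noncomputable def reduceExp (m : Fin 4 →₀ ℕ) : Fin 4 →₀ ℕ :=
  Finsupp.equivFunOnFinite.symm
    ![m 0 - min (m 0) (m 2), m 1 + min (m 0) (m 2), m 2 - min (m 0) (m 2), m 3 + min (m 0) (m 2)]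

lemma reduceExp_zero_or_two_eq_zero (m : Fin 4 →₀ ℕ) : reduceExp m 0 = 0 ∨ reduceExp m 2 = 0 := by
  change m 0 - min (m 0) (m 2) = 0 ∨ m 2 - min (m 0) (m 2) = 0
  omega

lemma monomial_sub_monomial_reduceExp_mem (m : Fin 4 →₀ ℕ) (r : R) :
    monomial m r - monomial (reduceExp m) r ∈ Ideal.span {X 0 * X 2 - X 1 * X 3} := by
  obtain ⟨a, c, j, ha, hc, hj⟩ : ∃ a c j, m 0 = a + j ∧ m 2 = c + j ∧ j = min (m 0) (m 2) :=
    ⟨_, _, _, (Nat.sub_add_cancel (min_le_left _ _)).symm,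
      (Nat.sub_add_cancel (min_le_right _ _)).symm, rfl⟩
  have hred : reduceExp m = Finsupp.equivFunOnFinite.symm ![a, m 1 + j, c, m 3 + j] := by
    ext i
    fin_cases i <;>
      simp only [reduceExp, Finsupp.equivFunOnFinite_symm_apply_apply, Fin.zero_eta, Fin.mk_one,
        Fin.reduceFinMk, Matrix.cons_val_zero, Matrix.cons_val_one, Matrix.cons_val] <;> omega
  rw [hred, monomial_eq_fin4, monomial_eq_fin4, Ideal.mem_span_singleton, ha, hc]
  obtain ⟨t, ht⟩ := sub_dvd_pow_sub_pow (X 0 * X 2 : MvPolynomial (Fin 4) R) (X 1 * X 3) j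
  refine ⟨C r * X 0 ^ a * X 1 ^ m 1 * X 2 ^ c * X 3 ^ m 3 * t, ?_⟩
  simp only [Matrix.cons_val, Finsupp.equivFunOnFinite_symm_apply_apply]
  linear_combination C r * X 0 ^ a * X 1 ^ m 1 * X 2 ^ c * X 3 ^ m 3 * ht

noncomputable def reduce (p : MvPolynomial (Fin 4) R) : MvPolynomial (Fin 4) R :=
  ∑ v ∈ p.support, monomial (reduceExp v) (coeff v p)

lemma sub_reduce_mem (p : MvPolynomial (Fin 4) R) :
    p - reduce p ∈ Ideal.span {X 0 * X 2 - X 1 * X 3} := by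
  have h : p - reduce p =
      ∑ v ∈ p.support, (monomial v (coeff v p) - monomial (reduceExp v) (coeff v p)) := by
    rw [Finset.sum_sub_distrib, ← as_sum p, reduce]
  rw [h]
  exact Ideal.sum_mem _ fun v _ => monomial_sub_monomial_reduceExp_mem v _

lemma zero_or_two_eq_zero_of_mem_support_reduce (p : MvPolynomial (Fin 4) R) :
    ∀ v ∈ (reduce p).support, v 0 = 0 ∨ v 2 = 0 := by
  intro v hv
  obtain ⟨m, -, hm⟩ := Finset.mem_biUnion.1 (support_sum hv)
  rw [Finset.mem_singleton.1 (support_monomial_subset hm)]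
  exact reduceExp_zero_or_two_eq_zero m

theorem ker_aeval_param :
    RingHom.ker (aeval (param R)) =
      Ideal.span {(X 0 * X 2 - X 1 * X 3 : MvPolynomial (Fin 4) R)} := by
  refine le_antisymm (fun p hp => ?_) ?_
  · have hred : aeval (param R) (reduce p) = 0 := by
      obtain ⟨t, ht⟩ := Ideal.mem_span_singleton.1 (sub_reduce_mem p)
      have := congrArg (aeval (param R)) ht
      rwa [map_mul, aeval_param_quadric, zero_mul, map_sub, RingHom.mem_ker.1 hp, zero_sub,
        neg_eq_zero] at this
    have hreduce := eq_zero_of_aeval_param_eq_zero (zero_or_two_eq_zero_of_mem_support_reduce p) hred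
    simpa [hreduce] using sub_reduce_mem p
  · rw [Ideal.span_le, Set.singleton_subset_iff]
    exact aeval_param_quadric

lemma weight_fin4 (m : Fin 4 →₀ ℕ) :
    Finsupp.weight ![((1 : ℕ), (0 : ℕ)), (1, 0), (0, 1), (0, 1)] m = (m 0 + m 1, m 2 + m 3) := by
  rw [Finsupp.weight_apply, Finsupp.sum_fintype _ _ (by simp)]
  simp [Fin.sum_univ_four, Prod.ext_iff]

lemma weight_fin3 (e : Fin 3 →₀ ℕ) :
    Finsupp.weight ![((1 : ℕ), (0 : ℕ)), (0, 1), (0, 0)] e = (e 0, e 1) := by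
  rw [Finsupp.weight_apply, Finsupp.sum_fintype _ _ (by simp)]
  simp [Fin.sum_univ_three, Prod.ext_iff]

lemma isWeightedHomogeneous_aeval_param {q : MvPolynomial (Fin 4) R} {d : ℕ × ℕ}
    (hq : q.IsWeightedHomogeneous ![(1, 0), (1, 0), (0, 1), (0, 1)] d) :
    (aeval (param R) q).IsWeightedHomogeneous ![(1, 0), (0, 1), (0, 0)] d := by
  intro e he
  rw [coeff_aeval_param] at he
  obtain ⟨v, hv, hne⟩ := Finset.exists_ne_zero_of_sum_ne_zero he
  obtain rfl : paramExp v = e := by_contra fun h => hne (if_neg h)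
  rw [← hq (mem_support_iff.1 hv), weight_fin3, weight_fin4]
  rfl

lemma _root_.Ideal.map_pow_le_span_singleton_pow {S T : Type*} [CommSemiring S] [CommSemiring T]
    (f : S →+* T) {J : Ideal S} {a : T} (hJ : J.map f ≤ Ideal.span {a}) (n : ℕ) :
    (J ^ n).map f ≤ Ideal.span {a ^ n} := by
  rw [Ideal.map_pow, ← Ideal.span_singleton_pow]
  exact Ideal.pow_right_mono hJ n

lemma map_aeval_param_le (n1 n2 : ℕ) :
    ((Ideal.span {X 0, X 1} : Ideal (MvPolynomial (Fin 4) R)) ^ n1 + (Ideal.span {X 2, X 3}) ^ n2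
        + Ideal.span {X 0 * X 2 - X 1 * X 3}).map (aeval (param R))
      ≤ Ideal.span {(X 0 : MvPolynomial (Fin 3) R) ^ n1} ⊔ Ideal.span {X 1 ^ n2} := by
  have hxy : (Ideal.span {X 0, X 1} : Ideal (MvPolynomial (Fin 4) R)).map (aeval (param R))
      ≤ Ideal.span {X 0} := by
    rw [Ideal.map_span, Ideal.span_le, Set.image_pair, Set.pair_subset_iff]
    simp [param, Ideal.mem_span_singleton]
  have hzw : (Ideal.span {X 2, X 3} : Ideal (MvPolynomial (Fin 4) R)).map (aeval (param R))
      ≤ Ideal.span {X 1} := by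
    rw [Ideal.map_span, Ideal.span_le, Set.image_pair, Set.pair_subset_iff]
    simp [param, Ideal.mem_span_singleton]
  simp only [Ideal.add_eq_sup, Ideal.map_sup]
  refine sup_le (sup_le_sup (Ideal.map_pow_le_span_singleton_pow _ hxy n1)
    (Ideal.map_pow_le_span_singleton_pow _ hzw n2)) ?_
  rw [Ideal.map_span, Ideal.span_le, Set.image_singleton, Set.singleton_subset_iff,
    aeval_param_quadric]
  exact zero_mem _

lemma coeff_eq_zero_of_mem_span_X_pow_sup {σ : Type*} {i j : σ} {n1 n2 : ℕ}
    {q : MvPolynomial σ R} (hq : q ∈ Ideal.span {X i ^ n1} ⊔ Ideal.span {X j ^ n2})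
    {e : σ →₀ ℕ} (hi : e i < n1) (hj : e j < n2) : coeff e q = 0 := by
  obtain ⟨q1, hq1, q2, hq2, rfl⟩ := Submodule.mem_sup.1 hq
  obtain ⟨a, rfl⟩ := Ideal.mem_span_singleton'.1 hq1
  obtain ⟨b, rfl⟩ := Ideal.mem_span_singleton'.1 hq2
  rw [coeff_add, X_pow_eq_monomial, X_pow_eq_monomial, coeff_mul_monomial', coeff_mul_monomial',
    if_neg, if_neg, add_zero]
  · rw [Finsupp.single_le_iff]; omega
  · rw [Finsupp.single_le_iff]; omega

lemma eq_zero_of_mem_span_X_pow_sup {n1 n2 : ℕ} {q : MvPolynomial (Fin 3) R} {d : ℕ × ℕ}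
    (hq : q ∈ Ideal.span {X 0 ^ n1} ⊔ Ideal.span {X 1 ^ n2})
    (hd : q.IsWeightedHomogeneous ![(1, 0), (0, 1), (0, 0)] d) (hd1 : d.1 < n1)
    (hd2 : d.2 < n2) :
    q = 0 := by
  ext e
  by_contra he
  have hwe := hd he
  rw [weight_fin3] at hwe
  subst hwe
  exact he (coeff_eq_zero_of_mem_span_X_pow_sup hq hd1 hd2)

lemma monomial_mem_span_X_pow {m : Fin 4 →₀ ℕ} {n : ℕ} (h : n ≤ m 2 + m 3) (r : R) :
    monomial m r ∈ (Ideal.span {X 2, X 3} : Ideal (MvPolynomial (Fin 4) R)) ^ n := by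
  have hzw : X 2 ^ m 2 * X 3 ^ m 3
      ∈ (Ideal.span {X 2, X 3} : Ideal (MvPolynomial (Fin 4) R)) ^ n := by
    refine Ideal.pow_le_pow_right h ?_
    rw [pow_add]
    exact Ideal.mul_mem_mul (Ideal.pow_mem_pow (Ideal.subset_span (by simp)) _)
      (Ideal.pow_mem_pow (Ideal.subset_span (by simp)) _)
  rw [monomial_eq_fin4, mul_assoc _ (X 2 ^ m 2)]
  exact Ideal.mul_mem_left _ _ hzw

lemma mem_span_X_pow_of_isWeightedHomogeneous {q : MvPolynomial (Fin 4) R} {d : ℕ × ℕ} {n : ℕ}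
    (hq : q.IsWeightedHomogeneous ![(1, 0), (1, 0), (0, 1), (0, 1)] d) (hn : n ≤ d.2) :
    q ∈ (Ideal.span {X 2, X 3} : Ideal (MvPolynomial (Fin 4) R)) ^ n := by
  rw [as_sum q]
  refine Ideal.sum_mem _ fun v hv => monomial_mem_span_X_pow ?_ _
  rw [← hq (mem_support_iff.1 hv), weight_fin4] at hn
  exact hn

end QuadricCone

open QuadricCone in
theorem stmt11_general (k : Type*) [Field k] (n1 n2 : ℕ) (h1 : 2 ≤ n1)
    (I : Ideal (MvPolynomial (Fin 4) k))
    (hI : I = (Ideal.span {X 0, X 1}) ^ n1 + (Ideal.span {X 2, X 3}) ^ n2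
        + Ideal.span {X 0 * X 2 - X 1 * X 3})
    (w : Fin 4 → ℕ × ℕ) (hw : w = ![(1, 0), (1, 0), (0, 1), (0, 1)])
    (i1 i2 : ℕ) (hi1 : i1 ≤ n1 - 2) :
    ∀ p ∈ weightedHomogeneousSubmodule k w (i1, i2),
      X 0 * p ∈ I → p ∈ I := by
  subst hI hw
  intro p hp hxp
  rw [mem_weightedHomogeneousSubmodule] at hp
  rcases le_or_gt n2 i2 with hi2 | hi2
  · exact Ideal.mem_sup_left
      (Ideal.mem_sup_right (mem_span_X_pow_of_isWeightedHomogeneous hp hi2))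
  have hxp0 : aeval (param k) (X 0 * p) = 0 :=
    eq_zero_of_mem_span_X_pow_sup (map_aeval_param_le n1 n2 (Ideal.mem_map_of_mem _ hxp))
      (isWeightedHomogeneous_aeval_param ((isWeightedHomogeneous_X k _ 0).mul hp))
      (by simp only [Matrix.cons_val_zero, Prod.fst_add]; omega) (by simpa using hi2)
  have hp0 : aeval (param k) p = 0 := by
    simpa [param, X_ne_zero] using hxp0
  have hpq : p ∈ Ideal.span {X 0 * X 2 - X 1 * X 3} := by
    rw [← ker_aeval_param]
    exact hp0
  exact Ideal.mem_sup_right hpq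

theorem stmt11 (k : Type*) [Field k] (n1 n2 : ℕ) (h1 : 2 ≤ n1) (h2 : 2 ≤ n2)
    (I : Ideal (MvPolynomial (Fin 4) k))
    (hI : I = (Ideal.span {X 0, X 1}) ^ n1 + (Ideal.span {X 2, X 3}) ^ n2
        + Ideal.span {X 0 * X 2 - X 1 * X 3})
    (w : Fin 4 → ℕ × ℕ) (hw : w = ![(1, 0), (1, 0), (0, 1), (0, 1)])
    (i1 i2 : ℕ) (hi1 : i1 ≤ n1 - 2) :
    ∀ p ∈ weightedHomogeneousSubmodule k w (i1, i2),
      X 0 * p ∈ I → p ∈ I :=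
  stmt11_general k n1 n2 h1 I hI w hw i1 i2 hi1
end

section
/- Let $k$ be a field of characteristic 0, $S = k[x,y,z,w]$, $n_1, n_2 \ge 3$, $I = (x,y)^{n_1} + (z,w)^{n_2} + (xz-yw)$, $A = S/I$, and let $s \in S$ be a bihomogeneous polynomial of bidegree $(n_1-1, n_2-1)$ with $s \notin I$. Set $J = I + (s)$ and $B = S/J$. Then $\mathrm{Soc}\, B = B_{(n_1-1, n_2-1)} = B_{n_1+n_2-2}$. -/
open MvPolynomial

section CompMul
variable {k : Type*} [CommRing k] {σ : Type*} {M : Type*} [AddCommMonoid M]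

lemma comp_finsum {w : σ → M} (m : M) (g : M → MvPolynomial σ k)
    (hfin : (Function.support g).Finite) :
    weightedHomogeneousComponent w m (∑ᶠ a, g a)
      = ∑ᶠ a, weightedHomogeneousComponent w m (g a) :=
  (weightedHomogeneousComponent w m).toAddMonoidHom.map_finsum hfin

lemma finsupp_mul_comp {w : σ → M} (h t : MvPolynomial σ k) :
    (Function.support fun a => h * weightedHomogeneousComponent w a t).Finite := by
  apply Set.Finite.subset (weightedHomogeneousComponent_finsupp t)
  intro ν hν
  simp only [Function.mem_support] at hν ⊢
  intro hc
  exact hν (by rw [hc, mul_zero])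

/-- component of a product with a weighted-homogeneous polynomial -/
lemma comp_mul_wh [IsCancelAdd M] {w : σ → M} {h : MvPolynomial σ k} {n : M}
    (hh : h.IsWeightedHomogeneous w n) (t : MvPolynomial σ k) (μ : M) :
    weightedHomogeneousComponent w (n + μ) (h * t)
      = h * weightedHomogeneousComponent w μ t := by
  classical
  conv_lhs => rw [← sum_weightedHomogeneousComponent w t]
  rw [mul_finsum' _ _ (weightedHomogeneousComponent_finsupp t),
    comp_finsum _ _ (finsupp_mul_comp h t)]
  rw [finsum_eq_single
      (fun ν => weightedHomogeneousComponent w (n + μ) (h * weightedHomogeneousComponent w ν t))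
      μ (fun ν hν => IsWeightedHomogeneous.weightedHomogeneousComponent_ne _
        (hh.mul (weightedHomogeneousComponent_isWeightedHomogeneous ν t))
        (by intro hc; exact hν (add_left_cancel hc.symm)))]
  exact IsWeightedHomogeneous.weightedHomogeneousComponent_same
    (hh.mul (weightedHomogeneousComponent_isWeightedHomogeneous μ t))

lemma comp_mul_wh_zero [IsCancelAdd M] {w : σ → M} {h : MvPolynomial σ k} {n : M}
    (hh : h.IsWeightedHomogeneous w n) (t : MvPolynomial σ k) (m : M)
    (hm : ∀ μ : M, n + μ ≠ m) :
    weightedHomogeneousComponent w m (h * t) = 0 := by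
  classical
  conv_lhs => rw [← sum_weightedHomogeneousComponent w t]
  rw [mul_finsum' _ _ (weightedHomogeneousComponent_finsupp t),
    comp_finsum _ _ (finsupp_mul_comp h t)]
  refine finsum_eq_zero_of_forall_eq_zero fun ν => ?_
  exact IsWeightedHomogeneous.weightedHomogeneousComponent_ne _
    (hh.mul (weightedHomogeneousComponent_isWeightedHomogeneous ν t))
    (fun hc => hm ν hc.symm)

lemma comp_mem_span_singleton [IsCancelAdd M] {w : σ → M} {h : MvPolynomial σ k} {n : M}
    (hh : h.IsWeightedHomogeneous w n) {u : MvPolynomial σ k}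
    (hu : u ∈ Ideal.span {h}) (m : M) :
    weightedHomogeneousComponent w m u ∈ Ideal.span {h} := by
  obtain ⟨t, rfl⟩ := Ideal.mem_span_singleton.mp hu
  by_cases hex : ∃ μ, n + μ = m
  · obtain ⟨μ, rfl⟩ := hex
    rw [comp_mul_wh hh]
    exact Ideal.mul_mem_right _ _ (Ideal.subset_span rfl)
  · rw [comp_mul_wh_zero hh _ _ (fun μ hc => hex ⟨μ, hc⟩)]
    exact zero_mem _
end CompMul

section Part2

variable {k : Type*} [Field k]

lemma weight_ww (d : Fin 4 →₀ ℕ) :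
    Finsupp.weight ![((1:ℕ), (0:ℕ)), (1, 0), (0, 1), (0, 1)] d = (d 0 + d 1, d 2 + d 3) := by
  rw [Finsupp.weight_apply, Finsupp.sum_fintype, Fin.sum_univ_four]
  · simp [Prod.ext_iff]
  · intro i; exact zero_smul ℕ _

/-- the "monomial ideal" of polynomials all of whose monomials have `d i + d j ≥ n` -/
def Mideal (i j : Fin 4) (n : ℕ) : Ideal (MvPolynomial (Fin 4) k) where
  carrier := {p | ∀ d ∈ p.support, n ≤ d i + d j}
  zero_mem' := by simp
  add_mem' {p q} hp hq d hd := by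
    rcases Finset.mem_union.mp (MvPolynomial.support_add hd) with h | h
    exacts [hp d h, hq d h]
  smul_mem' r p hp := by
    intro d hd
    classical
    obtain ⟨d1, hd1, d2, hd2, rfl⟩ := Finset.mem_add.mp (support_mul r p hd)
    have := hp d2 hd2
    simp only [Finsupp.add_apply]
    omega

lemma span_pow_le_Mideal (i j : Fin 4) (n : ℕ) :
    (Ideal.span {X i, X j} : Ideal (MvPolynomial (Fin 4) k)) ^ n ≤ Mideal i j n := by
  induction n with
  | zero => intro p _ d _; omega
  | succ n ih =>
    rw [pow_succ]
    refine Ideal.mul_le.mpr fun r hr p hp => ?_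
    intro d hd
    classical
    obtain ⟨d1, hd1, d2, hd2, rfl⟩ := Finset.mem_add.mp (support_mul r p hd)
    have h1 := ih hr d1 hd1
    have h2 : 1 ≤ d2 i + d2 j := by
      have : p ∈ Ideal.span ({X i, X j} : Set (MvPolynomial (Fin 4) k)) := hp
      rw [Ideal.span_insert, Submodule.mem_sup] at this
      obtain ⟨y, hy, z, hz, rfl⟩ := this
      rcases Finset.mem_union.mp (MvPolynomial.support_add hd2) with h | h
      · obtain ⟨a, rfl⟩ := Ideal.mem_span_singleton.mp hy
        obtain ⟨e1, he1, e2, he2, rfl⟩ := Finset.mem_add.mp (support_mul _ _ h)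
        rw [support_X] at he1
        simp only [Finset.mem_singleton] at he1
        subst he1
        have hi : (Finsupp.single i 1 + e2 : Fin 4 →₀ ℕ) i = 1 + e2 i := by simp
        omega
      · obtain ⟨a, rfl⟩ := Ideal.mem_span_singleton.mp hz
        obtain ⟨e1, he1, e2, he2, rfl⟩ := Finset.mem_add.mp (support_mul _ _ h)
        rw [support_X] at he1
        simp only [Finset.mem_singleton] at he1
        subst he1
        have hj : (Finsupp.single j 1 + e2 : Fin 4 →₀ ℕ) j = 1 + e2 j := by simp
        omega
    simp only [Finsupp.add_apply]
    omega

lemma mem_span_pow_of_support (i j : Fin 4) (hij : i ≠ j) (n : ℕ)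
    (p : MvPolynomial (Fin 4) k) (hp : ∀ d ∈ p.support, n ≤ d i + d j) :
    p ∈ (Ideal.span {X i, X j} : Ideal (MvPolynomial (Fin 4) k)) ^ n := by
  classical
  rw [← support_sum_monomial_coeff p]
  refine Ideal.sum_mem _ fun d hd => ?_
  have hdn := hp d hd
  have hXi : (X i : MvPolynomial (Fin 4) k) ∈ Ideal.span {X i, X j} :=
    Ideal.subset_span (by simp)
  have hXj : (X j : MvPolynomial (Fin 4) k) ∈ Ideal.span {X i, X j} :=
    Ideal.subset_span (by simp)
  have hsplit : d = Finsupp.single i (d i) + Finsupp.single j (d j)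
      + (d - Finsupp.single i (d i) - Finsupp.single j (d j)) := by
    apply Finsupp.ext
    intro a
    simp only [Finsupp.add_apply, Finsupp.tsub_apply, Finsupp.single_apply]
    by_cases hia : i = a <;> by_cases hja : j = a <;> simp_all
  have : monomial d (coeff d p)
      = (X i ^ d i * X j ^ d j) *
        monomial (d - Finsupp.single i (d i) - Finsupp.single j (d j)) (coeff d p) := by
    rw [X_pow_eq_monomial, X_pow_eq_monomial, monomial_mul, monomial_mul, one_mul, one_mul]
    rw [← hsplit]
  rw [this]
  refine Ideal.mul_mem_right _ _ ?_
  have : (X i : MvPolynomial (Fin 4) k) ^ d i * X j ^ d j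
      ∈ (Ideal.span {X i, X j} : Ideal (MvPolynomial (Fin 4) k)) ^ (d i + d j) := by
    rw [pow_add]
    exact Ideal.mul_mem_mul (Ideal.pow_mem_pow hXi _) (Ideal.pow_mem_pow hXj _)
  exact Ideal.pow_le_pow_right hdn this
end Part2


section XPrime
variable {k : Type*} [Field k] {σ : Type*} [DecidableEq σ]

/-- the substitution killing variable `i` -/
noncomputable def killX (i : σ) : MvPolynomial σ k →ₐ[k] MvPolynomial σ k :=
  aeval (fun j => if j = i then 0 else X j)

lemma killX_dvd_sub (i : σ) (f : MvPolynomial σ k) : X i ∣ f - killX i f := by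
  classical
  induction f using MvPolynomial.induction_on with
  | C a => simp [killX]
  | add p q hp hq =>
    have : p + q - killX i (p + q) = (p - killX i p) + (q - killX i q) := by
      rw [map_add]; ring
    rw [this]; exact dvd_add hp hq
  | mul_X p j hp =>
    have : p * X j - killX i (p * X j)
        = (p - killX i p) * X j + killX i p * (X j - killX i (X j)) := by
      rw [map_mul]; ring
    rw [this]
    refine dvd_add (hp.mul_right _) (Dvd.dvd.mul_left ?_ _)
    by_cases hj : j = i
    · subst hj; simp [killX]
    · simp [killX, hj]

lemma killX_X_self (i : σ) : killX (k := k) i (X i) = 0 := by simp [killX]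

lemma prime_X_mv (i : σ) : Prime (X i : MvPolynomial σ k) := by
  classical
  refine ⟨X_ne_zero i, ?_, ?_⟩
  · intro hu
    have h2 : IsUnit ((killX (k := k) i) (X i)) := hu.map _
    rw [killX_X_self] at h2
    exact not_isUnit_zero h2
  · intro a b hab
    obtain ⟨c, hc⟩ := hab
    have h0 : killX (k := k) i a * killX i b = 0 := by
      rw [← map_mul, hc, map_mul, killX_X_self, zero_mul]
    rcases mul_eq_zero.mp h0 with h | h
    · left
      have := killX_dvd_sub i a
      rwa [h, sub_zero] at this
    · right
      have := killX_dvd_sub i b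
      rwa [h, sub_zero] at this

lemma X_not_dvd_X {i j : σ} (hij : i ≠ j) : ¬ (X i : MvPolynomial σ k) ∣ X j := by
  classical
  intro h
  have := map_dvd (killX (k := k) i) h
  rw [killX_X_self] at this
  rw [zero_dvd_iff] at this
  have : (X j : MvPolynomial σ k) = 0 := by
    simpa [killX, hij, Ne.symm hij] using this
  exact X_ne_zero j this
end XPrime

section LinIrr
variable {R : Type*} [CommRing R] [IsDomain R]

lemma irreducible_C_mul_X_sub_C {c d : R} (hc : Prime c) (hcd : ¬ c ∣ d) :
    Irreducible (Polynomial.C c * Polynomial.X - Polynomial.C d) := by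
  set p := Polynomial.C c * Polynomial.X - Polynomial.C d with hp
  have hrw : p = Polynomial.C c * Polynomial.X + Polynomial.C (-d) := by
    rw [map_neg]; ring
  have hdeg : p.natDegree = 1 := by rw [hrw]; exact Polynomial.natDegree_linear hc.ne_zero
  have hpne : p ≠ 0 := fun h => by simp [h] at hdeg
  have hcoeff1 : p.coeff 1 = c := by simp [hp]
  have hcoeff0 : p.coeff 0 = -d := by simp [hp]
  have key : ∀ a b : Polynomial R, p = a * b → a.natDegree = 0 → IsUnit a := by
    intro a b hab ha0
    have ha := Polynomial.eq_C_of_natDegree_eq_zero ha0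
    set r := a.coeff 0 with hr
    have h1 : c = r * b.coeff 1 := by
      rw [← hcoeff1, hab, ha, Polynomial.coeff_C_mul]
    have h0 : r ∣ d := by
      have : -d = r * b.coeff 0 := by rw [← hcoeff0, hab, ha, Polynomial.coeff_C_mul]
      exact (dvd_neg.mp ⟨b.coeff 0, this⟩)
    rcases hc.irreducible.isUnit_or_isUnit h1 with hu | hu
    · rw [ha]; exact Polynomial.isUnit_C.mpr hu
    · exfalso
      apply hcd
      refine dvd_trans ?_ h0
      obtain ⟨u, hu⟩ := hu
      refine ⟨(↑u⁻¹ : R), ?_⟩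
      have : c * ↑u⁻¹ = (r * ↑u) * ↑u⁻¹ := by rw [hu, ← h1]
      rw [this, mul_assoc, Units.mul_inv, mul_one]
  constructor
  · intro hu
    have := Polynomial.natDegree_eq_zero_of_isUnit hu
    omega
  · intro a b hab
    have hane : a ≠ 0 := fun h => hpne (by rw [hab, h, zero_mul])
    have hbne : b ≠ 0 := fun h => hpne (by rw [hab, h, mul_zero])
    have : a.natDegree + b.natDegree = 1 := by
      rw [← Polynomial.natDegree_mul hane hbne, ← hab, hdeg]
    rcases Nat.eq_zero_or_pos a.natDegree with h | h
    · exact Or.inl (key a b hab h)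
    · exact Or.inr (key b a (by rw [hab, mul_comm]) (by omega))
end LinIrr

section PrimeQ
variable {k : Type*} [Field k]

lemma prime_q : Prime (X 0 * X 2 - X 1 * X 3 : MvPolynomial (Fin 4) k) := by
  have e := MvPolynomial.finSuccEquiv k 3
  rw [← MulEquiv.prime_iff (MvPolynomial.finSuccEquiv k 3).toRingEquiv.toMulEquiv]
  have h1 : (X 1 : MvPolynomial (Fin 4) k) = X (Fin.succ 0) := rfl
  have h2 : (X 2 : MvPolynomial (Fin 4) k) = X (Fin.succ 1) := rfl
  have h3 : (X 3 : MvPolynomial (Fin 4) k) = X (Fin.succ 2) := rfl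
  have heq : (MvPolynomial.finSuccEquiv k 3) (X 0 * X 2 - X 1 * X 3)
      = Polynomial.C (X 1) * Polynomial.X - Polynomial.C (X 0 * X 2) := by
    rw [map_sub, map_mul, map_mul, h1, h2, h3, finSuccEquiv_X_zero,
      finSuccEquiv_X_succ, finSuccEquiv_X_succ, finSuccEquiv_X_succ, map_mul]
    ring
  have : (MvPolynomial.finSuccEquiv k 3).toRingEquiv.toMulEquiv (X 0 * X 2 - X 1 * X 3)
      = Polynomial.C (X 1) * Polynomial.X - Polynomial.C (X 0 * X 2) := heq
  rw [this]
  rw [← UniqueFactorizationMonoid.irreducible_iff_prime]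
  refine irreducible_C_mul_X_sub_C (prime_X_mv 1) ?_
  intro hdvd
  rcases (prime_X_mv (k := k) 1).2.2 _ _ hdvd with h | h
  · exact X_not_dvd_X (by decide) h
  · exact X_not_dvd_X (by decide) h
end PrimeQ

section Part4
variable {k : Type*} [Field k]

local notation "ww" => (![((1:ℕ), (0:ℕ)), (1, 0), (0, 1), (0, 1)] : Fin 4 → ℕ × ℕ)
local notation "SS" => MvPolynomial (Fin 4) k
local notation "qq" => (X 0 * X 2 - X 1 * X 3 : MvPolynomial (Fin 4) k)

lemma wh_q : IsWeightedHomogeneous ww qq ((1:ℕ), (1:ℕ)) := by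
  have h02 : IsWeightedHomogeneous ww (X 0 * X 2 : SS) ((1:ℕ),(1:ℕ)) :=
    (isWeightedHomogeneous_X k ww 0).mul (isWeightedHomogeneous_X k ww 2)
  have h13 : IsWeightedHomogeneous ww (X 1 * X 3 : SS) ((1:ℕ),(1:ℕ)) :=
    (isWeightedHomogeneous_X k ww 1).mul (isWeightedHomogeneous_X k ww 3)
  exact (weightedHomogeneousSubmodule k ww ((1:ℕ),(1:ℕ))).sub_mem h02 h13

lemma wh_X0 : IsWeightedHomogeneous ww (X 0 : SS) ((1:ℕ), (0:ℕ)) := isWeightedHomogeneous_X k ww 0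
lemma wh_X1 : IsWeightedHomogeneous ww (X 1 : SS) ((1:ℕ), (0:ℕ)) := isWeightedHomogeneous_X k ww 1
lemma wh_X2 : IsWeightedHomogeneous ww (X 2 : SS) ((0:ℕ), (1:ℕ)) := isWeightedHomogeneous_X k ww 2
lemma wh_X3 : IsWeightedHomogeneous ww (X 3 : SS) ((0:ℕ), (1:ℕ)) := isWeightedHomogeneous_X k ww 3

/-- weighted homogeneous of weight 0 is constant -/
lemma wh_zero_eq_C {p : SS} (hp : IsWeightedHomogeneous ww p ((0:ℕ),(0:ℕ))) :
    p = C (coeff 0 p) := by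
  classical
  ext d
  rcases eq_or_ne d 0 with rfl | hd
  · simp
  · rw [coeff_C, if_neg (Ne.symm hd)]
    by_contra hc
    have := hp hc
    rw [weight_ww] at this
    rw [Prod.ext_iff] at this
    apply hd
    apply Finsupp.ext
    intro a
    fin_cases a <;> simp_all <;> omega

/-- a ww-homogeneous polynomial of weight with large first component is in (x,y)^n -/
lemma wh_mem_pow01 {g : SS} {m : ℕ × ℕ} (hg : IsWeightedHomogeneous ww g m) {n : ℕ}
    (hn : n ≤ m.1) : g ∈ (Ideal.span {X 0, X 1} : Ideal SS) ^ n := by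
  refine mem_span_pow_of_support 0 1 (by decide) n g fun d hd => ?_
  have := hg (mem_support_iff.mp hd)
  rw [weight_ww, Prod.ext_iff] at this
  simp only at this
  omega

lemma wh_mem_pow23 {g : SS} {m : ℕ × ℕ} (hg : IsWeightedHomogeneous ww g m) {n : ℕ}
    (hn : n ≤ m.2) : g ∈ (Ideal.span {X 2, X 3} : Ideal SS) ^ n := by
  refine mem_span_pow_of_support 2 3 (by decide) n g fun d hd => ?_
  have := hg (mem_support_iff.mp hd)
  rw [weight_ww, Prod.ext_iff] at this
  simp only at this
  omega

/-- support of a weighted component is contained in the original support -/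
lemma coeff_comp_ne {m : ℕ × ℕ} {p : SS} {d : Fin 4 →₀ ℕ}
    (h : coeff d (weightedHomogeneousComponent ww m p) ≠ 0) :
    coeff d p ≠ 0 ∧ Finsupp.weight ww d = m := by
  classical
  rw [coeff_weightedHomogeneousComponent] at h
  by_cases hw : Finsupp.weight ww d = m
  · rw [if_pos hw] at h; exact ⟨h, hw⟩
  · rw [if_neg hw] at h; exact absurd rfl h

/-- component of a member of (x,y)^n stays in it -/
lemma comp_mem_pow01 {p : SS} {n : ℕ} (hp : p ∈ (Ideal.span {X 0, X 1} : Ideal SS) ^ n)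
    (m : ℕ × ℕ) :
    weightedHomogeneousComponent ww m p ∈ (Ideal.span {X 0, X 1} : Ideal SS) ^ n := by
  refine mem_span_pow_of_support 0 1 (by decide) n _ fun d hd => ?_
  have hd' := (coeff_comp_ne (mem_support_iff.mp hd)).1
  exact span_pow_le_Mideal 0 1 n hp d (mem_support_iff.mpr hd')

lemma comp_mem_pow23 {p : SS} {n : ℕ} (hp : p ∈ (Ideal.span {X 2, X 3} : Ideal SS) ^ n)
    (m : ℕ × ℕ) :
    weightedHomogeneousComponent ww m p ∈ (Ideal.span {X 2, X 3} : Ideal SS) ^ n := by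
  refine mem_span_pow_of_support 2 3 (by decide) n _ fun d hd => ?_
  have hd' := (coeff_comp_ne (mem_support_iff.mp hd)).1
  exact span_pow_le_Mideal 2 3 n hp d (mem_support_iff.mpr hd')

/-- component of a member of (x,y)^n vanishes in low bidegree -/
lemma comp_pow01_vanish {p : SS} {n : ℕ} (hp : p ∈ (Ideal.span {X 0, X 1} : Ideal SS) ^ n)
    {m : ℕ × ℕ} (hm : m.1 < n) :
    weightedHomogeneousComponent ww m p = 0 := by
  classical
  ext d
  rw [coeff_zero]
  by_contra hc
  obtain ⟨h1, h2⟩ := coeff_comp_ne hc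
  have := span_pow_le_Mideal 0 1 n hp d (mem_support_iff.mpr h1)
  rw [weight_ww, Prod.ext_iff] at h2
  simp only at h2
  omega

lemma comp_pow23_vanish {p : SS} {n : ℕ} (hp : p ∈ (Ideal.span {X 2, X 3} : Ideal SS) ^ n)
    {m : ℕ × ℕ} (hm : m.2 < n) :
    weightedHomogeneousComponent ww m p = 0 := by
  classical
  ext d
  rw [coeff_zero]
  by_contra hc
  obtain ⟨h1, h2⟩ := coeff_comp_ne hc
  have := span_pow_le_Mideal 2 3 n hp d (mem_support_iff.mpr h1)
  rw [weight_ww, Prod.ext_iff] at h2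
  simp only at h2
  omega

/-- evaluation criterion for not being in the span of q -/
lemma not_mem_span_q (pt : Fin 4 → k) (hpt : eval pt qq = 0) {f : SS}
    (hf : eval pt f ≠ 0) : f ∉ Ideal.span {qq} := by
  intro h
  obtain ⟨t, rfl⟩ := Ideal.mem_span_singleton.mp h
  rw [map_mul, hpt, zero_mul] at hf
  exact hf rfl

end Part4

section WeightOne
lemma weight_one4 (d : Fin 4 →₀ ℕ) :
    Finsupp.weight (1 : Fin 4 → ℕ) d = d 0 + d 1 + d 2 + d 3 := by
  rw [Finsupp.weight_apply, Finsupp.sum_fintype, Fin.sum_univ_four]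
  · simp
  · intro i; simp
end WeightOne

section Part5
variable {k : Type*} [Field k]

local notation "ww" => (![((1:ℕ), (0:ℕ)), (1, 0), (0, 1), (0, 1)] : Fin 4 → ℕ × ℕ)
local notation "SS" => MvPolynomial (Fin 4) k
local notation "qq" => (X 0 * X 2 - X 1 * X 3 : MvPolynomial (Fin 4) k)
local notation "II" n1:max n2:max =>
  ((Ideal.span {X 0, X 1}) ^ n1 + (Ideal.span {X 2, X 3}) ^ n2
    + Ideal.span {qq} : Ideal (MvPolynomial (Fin 4) k))

lemma compI_mem {n1 n2 : ℕ} {i : SS} (hi : i ∈ II n1 n2) {m : ℕ × ℕ}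
    (hm1 : m.1 < n1) (hm2 : m.2 < n2) :
    weightedHomogeneousComponent ww m i ∈ Ideal.span {qq} := by
  rw [Submodule.add_eq_sup, Submodule.add_eq_sup] at hi
  obtain ⟨x, hx, z, hz, rfl⟩ := Submodule.mem_sup.mp hi
  obtain ⟨x1, hx1, x2, hx2, rfl⟩ := Submodule.mem_sup.mp hx
  rw [map_add, map_add, comp_pow01_vanish hx1 hm1, comp_pow23_vanish hx2 hm2,
    zero_add, zero_add]
  exact comp_mem_span_singleton wh_q hz m

lemma compI_mem_I {n1 n2 : ℕ} {i : SS} (hi : i ∈ II n1 n2) (m : ℕ × ℕ) :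
    weightedHomogeneousComponent ww m i ∈ II n1 n2 := by
  rw [Submodule.add_eq_sup, Submodule.add_eq_sup] at hi ⊢
  obtain ⟨x, hx, z, hz, rfl⟩ := Submodule.mem_sup.mp hi
  obtain ⟨x1, hx1, x2, hx2, rfl⟩ := Submodule.mem_sup.mp hx
  rw [map_add, map_add]
  refine Submodule.add_mem _ (Submodule.add_mem _ ?_ ?_) ?_
  · exact Submodule.mem_sup_left (Submodule.mem_sup_left (comp_mem_pow01 hx1 m))
  · exact Submodule.mem_sup_left (Submodule.mem_sup_right (comp_mem_pow23 hx2 m))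
  · exact Submodule.mem_sup_right (comp_mem_span_singleton wh_q hz m)

lemma compJ_mem {n1 n2 : ℕ} {s : SS} (hs : IsWeightedHomogeneous ww s (n1 - 1, n2 - 1))
    {u : SS} (hu : u ∈ II n1 n2 + Ideal.span {s}) (m : ℕ × ℕ) :
    weightedHomogeneousComponent ww m u ∈ II n1 n2 + Ideal.span {s} := by
  rw [Submodule.add_eq_sup] at hu ⊢
  obtain ⟨i, hi, v, hv, rfl⟩ := Submodule.mem_sup.mp hu
  rw [map_add]
  exact Submodule.add_mem _ (Submodule.mem_sup_left (compI_mem_I hi m))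
    (Submodule.mem_sup_right (comp_mem_span_singleton hs hv m))

/-- the key branch lemma: a bihomogeneous `g` of subtop bidegree killed by the two relevant
variables is in the span of q -/
lemma socle_branch {n1 n2 : ℕ} (hn1 : 3 ≤ n1) (hn2 : 3 ≤ n2)
    {s : SS} (hs : IsWeightedHomogeneous ww s (n1 - 1, n2 - 1))
    {v0 v1 : SS} {dir : ℕ × ℕ}
    (hv0 : IsWeightedHomogeneous ww v0 dir) (hv1 : IsWeightedHomogeneous ww v1 dir)
    (hv0P : v0 ∉ Ideal.span {qq})
    (hlin : ∀ α β : k, ¬(α = 0 ∧ β = 0) → (C β * v0 - C α * v1) ∉ Ideal.span {qq})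
    {g : SS} {m : ℕ × ℕ} (hg : IsWeightedHomogeneous ww g m)
    (hm1 : (dir + m).1 ≤ n1 - 1) (hm2 : (dir + m).2 ≤ n2 - 1)
    (h0 : v0 * g ∈ II n1 n2 + Ideal.span {s}) (h1 : v1 * g ∈ II n1 n2 + Ideal.span {s}) :
    g ∈ Ideal.span {qq} := by
  have hP : (Ideal.span {qq} : Ideal SS).IsPrime :=
    (Ideal.span_singleton_prime (prime_q).ne_zero).mpr prime_q
  have claim : ∀ v : SS, IsWeightedHomogeneous ww v dir →
      v * g ∈ II n1 n2 + Ideal.span {s} →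
      ∃ α : k, v * g - C α * s ∈ Ideal.span {qq} := by
    intro v hv hmem
    rw [Submodule.add_eq_sup] at hmem
    obtain ⟨i, hi, u, hu, heq⟩ := Submodule.mem_sup.mp hmem
    have hvg : IsWeightedHomogeneous ww (v * g) (dir + m) := hv.mul hg
    have hsame : weightedHomogeneousComponent ww (dir + m) (v * g) = v * g :=
      hvg.weightedHomogeneousComponent_same
    have hcompi : weightedHomogeneousComponent ww (dir + m) i ∈ Ideal.span {qq} :=
      compI_mem hi (by omega) (by omega)
    obtain ⟨t, rfl⟩ := Ideal.mem_span_singleton.mp hu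
    by_cases hex : ∃ μ : ℕ × ℕ, (n1 - 1, n2 - 1) + μ = dir + m
    · obtain ⟨μ, hμ⟩ := hex
      rw [Prod.ext_iff] at hμ
      simp only [Prod.fst_add, Prod.snd_add] at hμ
      have hfst : (dir + m).1 = dir.1 + m.1 := rfl
      have hsnd : (dir + m).2 = dir.2 + m.2 := rfl
      have hdm : dir + m = (n1 - 1, n2 - 1) := by
        rw [Prod.ext_iff]
        constructor <;> omega
      refine ⟨coeff 0 (weightedHomogeneousComponent ww ((0:ℕ), (0:ℕ)) t), ?_⟩
      have hcomp_u : weightedHomogeneousComponent ww (dir + m) (s * t)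
          = s * C (coeff 0 (weightedHomogeneousComponent ww ((0:ℕ), (0:ℕ)) t)) := by
        rw [hdm,
          show ((n1 - 1, n2 - 1) : ℕ × ℕ) = (n1 - 1, n2 - 1) + ((0:ℕ), (0:ℕ)) from by simp,
          comp_mul_wh hs t ((0:ℕ), (0:ℕ))]
        congr 1
        exact wh_zero_eq_C (weightedHomogeneousComponent_isWeightedHomogeneous _ t)
      have : v * g = weightedHomogeneousComponent ww (dir + m) i + s * C (coeff 0 (weightedHomogeneousComponent ww ((0:ℕ), (0:ℕ)) t)) := by
        rw [← hcomp_u, ← map_add, heq, hsame]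
      rw [this]
      have hre : weightedHomogeneousComponent ww (dir + m) i + s * C (coeff 0 (weightedHomogeneousComponent ww ((0:ℕ), (0:ℕ)) t))
          - C (coeff 0 (weightedHomogeneousComponent ww ((0:ℕ), (0:ℕ)) t)) * s = weightedHomogeneousComponent ww (dir + m) i := by ring
      rw [hre]
      exact hcompi
    · refine ⟨0, ?_⟩
      have hcomp_u : weightedHomogeneousComponent ww (dir + m) (s * t) = 0 :=
        comp_mul_wh_zero hs t _ (fun μ hc => hex ⟨μ, hc⟩)
      have : v * g = weightedHomogeneousComponent ww (dir + m) i := by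
        conv_lhs => rw [← hsame, ← heq]
        rw [map_add, hcomp_u, add_zero]
      rw [map_zero, zero_mul, sub_zero, this]
      exact hcompi
  obtain ⟨α, hα⟩ := claim v0 hv0 h0
  obtain ⟨β, hβ⟩ := claim v1 hv1 h1
  by_cases hz : α = 0 ∧ β = 0
  · obtain ⟨rfl, -⟩ := hz
    rw [map_zero, zero_mul, sub_zero] at hα
    rcases hP.mem_or_mem hα with h | h
    · exact absurd h hv0P
    · exact h
  · have hl : (C β * v0 - C α * v1) * g ∈ Ideal.span {qq} := by
      have hre : (C β * v0 - C α * v1) * g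
          = C β * (v0 * g - C α * s) - C α * (v1 * g - C β * s) := by ring
      rw [hre]
      exact Submodule.sub_mem _ (Ideal.mul_mem_left _ _ hα) (Ideal.mul_mem_left _ _ hβ)
    rcases hP.mem_or_mem hl with h | h
    · exact absurd h (hlin α β hz)
    · exact h
end Part5

theorem stmt12 (k : Type*) [Field k] [CharZero k] (n1 n2 : ℕ) (h1 : 3 ≤ n1) (h2 : 3 ≤ n2)
    (I : Ideal (MvPolynomial (Fin 4) k))
    (hI : I = (Ideal.span {X 0, X 1}) ^ n1 + (Ideal.span {X 2, X 3}) ^ n2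
        + Ideal.span {X 0 * X 2 - X 1 * X 3})
    (w : Fin 4 → ℕ × ℕ) (hw : w = ![(1, 0), (1, 0), (0, 1), (0, 1)])
    (s : MvPolynomial (Fin 4) k)
    (hs : s ∈ weightedHomogeneousSubmodule k w (n1 - 1, n2 - 1)) (hsI : s ∉ I)
    (J : Ideal (MvPolynomial (Fin 4) k)) (hJ : J = I + Ideal.span {s}) :
    ({b : MvPolynomial (Fin 4) k ⧸ J |
        Ideal.Quotient.mk J (X 0) * b = 0 ∧ Ideal.Quotient.mk J (X 1) * b = 0 ∧
        Ideal.Quotient.mk J (X 2) * b = 0 ∧ Ideal.Quotient.mk J (X 3) * b = 0}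
      = Ideal.Quotient.mk J ''
          ↑(weightedHomogeneousSubmodule k w (n1 - 1, n2 - 1))) ∧
    ({b : MvPolynomial (Fin 4) k ⧸ J |
        Ideal.Quotient.mk J (X 0) * b = 0 ∧ Ideal.Quotient.mk J (X 1) * b = 0 ∧
        Ideal.Quotient.mk J (X 2) * b = 0 ∧ Ideal.Quotient.mk J (X 3) * b = 0}
      = Ideal.Quotient.mk J ''
          ↑(homogeneousSubmodule (Fin 4) k (n1 + n2 - 2))) := by
  classical
  subst hJ
  subst hI
  subst hw
  set ww4 : Fin 4 → ℕ × ℕ := ![(1, 0), (1, 0), (0, 1), (0, 1)] with hww4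
  set top : ℕ × ℕ := (n1 - 1, n2 - 1) with htop
  set qq : MvPolynomial (Fin 4) k := X 0 * X 2 - X 1 * X 3 with hqq
  set I : Ideal (MvPolynomial (Fin 4) k) :=
    (Ideal.span {X 0, X 1}) ^ n1 + (Ideal.span {X 2, X 3}) ^ n2 + Ideal.span {qq} with hI
  set J : Ideal (MvPolynomial (Fin 4) k) := I + Ideal.span {s} with hJ
  have hsw : IsWeightedHomogeneous ww4 s top := (mem_weightedHomogeneousSubmodule _ _ _ _).mp hs
  -- inclusions of the pieces into J
  have hA_J : ∀ p : MvPolynomial (Fin 4) k, p ∈ (Ideal.span {X 0, X 1} : Ideal (MvPolynomial (Fin 4) k)) ^ n1 → p ∈ J := by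
    intro p hp
    exact Submodule.mem_sup_left (Submodule.mem_sup_left (Submodule.mem_sup_left hp))
  have hB_J : ∀ p : MvPolynomial (Fin 4) k, p ∈ (Ideal.span {X 2, X 3} : Ideal (MvPolynomial (Fin 4) k)) ^ n2 → p ∈ J := by
    intro p hp
    exact Submodule.mem_sup_left (Submodule.mem_sup_left (Submodule.mem_sup_right hp))
  have hP_J : ∀ p : MvPolynomial (Fin 4) k, p ∈ (Ideal.span {qq} : Ideal (MvPolynomial (Fin 4) k)) → p ∈ J := by
    intro p hp
    exact Submodule.mem_sup_left (Submodule.mem_sup_right hp)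
  -- nonmembership facts
  have hX0P : (X 0 : MvPolynomial (Fin 4) k) ∉ Ideal.span {qq} := by
    refine not_mem_span_q ![1, 0, 0, 0] (by simp [hqq]) ?_
    simp
  have hX2P : (X 2 : MvPolynomial (Fin 4) k) ∉ Ideal.span {qq} := by
    refine not_mem_span_q ![0, 0, 1, 0] (by simp [hqq]) ?_
    simp
  have hlin01 : ∀ α β : k, ¬(α = 0 ∧ β = 0) →
      (C β * X 0 - C α * X 1 : MvPolynomial (Fin 4) k) ∉ Ideal.span {qq} := by
    intro α β hz
    by_cases hβ : β = 0
    · have hα : α ≠ 0 := by tauto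
      refine not_mem_span_q ![0, 1, 0, 0] (by simp [hqq]) ?_
      simp [hβ, hα]
    · refine not_mem_span_q ![1, 0, 0, 0] (by simp [hqq]) ?_
      simp [hβ]
  have hlin23 : ∀ α β : k, ¬(α = 0 ∧ β = 0) →
      (C β * X 2 - C α * X 3 : MvPolynomial (Fin 4) k) ∉ Ideal.span {qq} := by
    intro α β hz
    by_cases hβ : β = 0
    · have hα : α ≠ 0 := by tauto
      refine not_mem_span_q ![0, 0, 0, 1] (by simp [hqq]) ?_
      simp [hβ, hα]
    · refine not_mem_span_q ![0, 0, 1, 0] (by simp [hqq]) ?_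
      simp [hβ]
  -- the decomposition principle
  have hdecomp : ∀ f : MvPolynomial (Fin 4) k,
      (∀ m : ℕ × ℕ, m ≠ top → weightedHomogeneousComponent ww4 m f ∈ J) →
      Ideal.Quotient.mk J (weightedHomogeneousComponent ww4 top f) = Ideal.Quotient.mk J f := by
    intro f hcomp
    rw [Ideal.Quotient.mk_eq_mk_iff_sub_mem]
    have hfin := weightedHomogeneousComponent_finsupp (w := ww4) f
    set T := hfin.toFinset with hT
    have hsum : f = ∑ m ∈ insert top T, weightedHomogeneousComponent ww4 m f := by
      conv_lhs => rw [← sum_weightedHomogeneousComponent ww4 f]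
      rw [finsum_eq_sum _ hfin]
      exact (Finset.sum_insert_of_eq_zero_if_notMem (fun hnot => by
        have := Set.Finite.mem_toFinset hfin (a := top)
        rw [← hT] at this
        by_contra hne
        exact hnot (this.mpr hne))).symm
    have hdiff : f - weightedHomogeneousComponent ww4 top f
        = ∑ m ∈ (insert top T).erase top, weightedHomogeneousComponent ww4 m f := by
      have h := Finset.sum_erase_add (insert top T)
        (fun m => weightedHomogeneousComponent ww4 m f) (Finset.mem_insert_self top T)
      rw [← hsum] at h
      exact (eq_sub_iff_add_eq.mpr h).symm
    have hmem : f - weightedHomogeneousComponent ww4 top f ∈ J := by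
      rw [hdiff]
      exact Ideal.sum_mem _ (fun m hm => hcomp m (Finset.ne_of_mem_erase hm))
    have : weightedHomogeneousComponent ww4 top f - f
        = -(f - weightedHomogeneousComponent ww4 top f) := by ring
    rw [this]
    exact Submodule.neg_mem _ hmem
  -- main equality
  have hmain : {b : MvPolynomial (Fin 4) k ⧸ J |
        Ideal.Quotient.mk J (X 0) * b = 0 ∧ Ideal.Quotient.mk J (X 1) * b = 0 ∧
        Ideal.Quotient.mk J (X 2) * b = 0 ∧ Ideal.Quotient.mk J (X 3) * b = 0}
      = Ideal.Quotient.mk J '' ↑(weightedHomogeneousSubmodule k ww4 top) := by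
    apply Set.ext
    intro b
    constructor
    · rintro ⟨hb0, hb1, hb2, hb3⟩
      obtain ⟨f, rfl⟩ := Ideal.Quotient.mk_surjective b
      have hf0 : X 0 * f ∈ J := Ideal.Quotient.eq_zero_iff_mem.mp (by rw [map_mul]; exact hb0)
      have hf1 : X 1 * f ∈ J := Ideal.Quotient.eq_zero_iff_mem.mp (by rw [map_mul]; exact hb1)
      have hf2 : X 2 * f ∈ J := Ideal.Quotient.eq_zero_iff_mem.mp (by rw [map_mul]; exact hb2)
      have hf3 : X 3 * f ∈ J := Ideal.Quotient.eq_zero_iff_mem.mp (by rw [map_mul]; exact hb3)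
      have hcomp : ∀ m : ℕ × ℕ, m ≠ top → weightedHomogeneousComponent ww4 m f ∈ J := by
        intro m hne
        have hg : IsWeightedHomogeneous ww4 (weightedHomogeneousComponent ww4 m f) m :=
          weightedHomogeneousComponent_isWeightedHomogeneous m f
        by_cases hc1 : n1 ≤ m.1
        · exact hA_J _ (wh_mem_pow01 hg hc1)
        by_cases hc2 : n2 ≤ m.2
        · exact hB_J _ (wh_mem_pow23 hg hc2)
        have hcm0 : X 0 * weightedHomogeneousComponent ww4 m f ∈ J := by
          rw [← comp_mul_wh wh_X0 f m]
          exact compJ_mem hsw hf0 _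
        have hcm1 : X 1 * weightedHomogeneousComponent ww4 m f ∈ J := by
          rw [← comp_mul_wh wh_X1 f m]
          exact compJ_mem hsw hf1 _
        have hcm2 : X 2 * weightedHomogeneousComponent ww4 m f ∈ J := by
          rw [← comp_mul_wh wh_X2 f m]
          exact compJ_mem hsw hf2 _
        have hcm3 : X 3 * weightedHomogeneousComponent ww4 m f ∈ J := by
          rw [← comp_mul_wh wh_X3 f m]
          exact compJ_mem hsw hf3 _
        have hcase : m.1 ≠ n1 - 1 ∨ m.2 ≠ n2 - 1 := by
          by_contra hcc
          push_neg at hcc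
          exact hne (Prod.ext hcc.1 hcc.2)
        rcases hcase with hx | hz
        · refine hP_J _ (socle_branch h1 h2 hsw wh_X0 wh_X1 hX0P hlin01 hg ?_ ?_ hcm0 hcm1)
          · show 1 + m.1 ≤ n1 - 1
            omega
          · show 0 + m.2 ≤ n2 - 1
            omega
        · refine hP_J _ (socle_branch h1 h2 hsw wh_X2 wh_X3 hX2P hlin23 hg ?_ ?_ hcm2 hcm3)
          · show 0 + m.1 ≤ n1 - 1
            omega
          · show 1 + m.2 ≤ n2 - 1
            omega
      exact ⟨weightedHomogeneousComponent ww4 top f,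
        weightedHomogeneousComponent_mem ww4 f top, hdecomp f hcomp⟩
    · rintro ⟨f, hf, rfl⟩
      have hfw : IsWeightedHomogeneous ww4 f top := hf
      have key : ∀ v : MvPolynomial (Fin 4) k, ∀ dir : ℕ × ℕ, IsWeightedHomogeneous ww4 v dir →
          (n1 ≤ (dir + top).1 ∨ n2 ≤ (dir + top).2) →
          Ideal.Quotient.mk J v * Ideal.Quotient.mk J f = 0 := by
        intro v dir hv hcase
        rw [← map_mul, Ideal.Quotient.eq_zero_iff_mem]
        rcases hcase with hc | hc
        · exact hA_J _ (wh_mem_pow01 (hv.mul hfw) hc)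
        · exact hB_J _ (wh_mem_pow23 (hv.mul hfw) hc)
      refine ⟨key _ _ wh_X0 (Or.inl ?_), key _ _ wh_X1 (Or.inl ?_),
        key _ _ wh_X2 (Or.inr ?_), key _ _ wh_X3 (Or.inr ?_)⟩
      · show n1 ≤ 1 + (n1 - 1); omega
      · show n1 ≤ 1 + (n1 - 1); omega
      · show n2 ≤ 1 + (n2 - 1); omega
      · show n2 ≤ 1 + (n2 - 1); omega
  -- the two images agree
  have himg : Ideal.Quotient.mk J '' ↑(weightedHomogeneousSubmodule k ww4 top)
      = Ideal.Quotient.mk J '' ↑(homogeneousSubmodule (Fin 4) k (n1 + n2 - 2)) := by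
    apply Set.ext
    intro b
    constructor
    · rintro ⟨f, hf, rfl⟩
      have hfw : IsWeightedHomogeneous ww4 f top := hf
      refine ⟨f, ?_, rfl⟩
      show f ∈ homogeneousSubmodule (Fin 4) k (n1 + n2 - 2)
      rw [mem_homogeneousSubmodule]
      intro d hd
      have h := hfw hd
      rw [weight_ww, htop, Prod.ext_iff] at h
      simp only at h
      rw [weight_one4]
      omega
    · rintro ⟨f, hf, rfl⟩
      have hfh : IsWeightedHomogeneous 1 f (n1 + n2 - 2) :=
        (mem_homogeneousSubmodule _ _).mp hf
      refine ⟨weightedHomogeneousComponent ww4 top f,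
        weightedHomogeneousComponent_mem ww4 f top, ?_⟩
      apply hdecomp
      intro m hne
      by_cases hzero : weightedHomogeneousComponent ww4 m f = 0
      · rw [hzero]; exact Submodule.zero_mem _
      have hg : IsWeightedHomogeneous ww4 (weightedHomogeneousComponent ww4 m f) m :=
        weightedHomogeneousComponent_isWeightedHomogeneous m f
      obtain ⟨d, hd⟩ := MvPolynomial.ne_zero_iff.mp hzero
      obtain ⟨hdf, hdw⟩ := coeff_comp_ne hd
      have hdeg := hfh hdf
      rw [weight_one4] at hdeg
      rw [weight_ww, Prod.ext_iff] at hdw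
      simp only at hdw
      have hnetop : m.1 ≠ n1 - 1 ∨ m.2 ≠ n2 - 1 := by
        by_contra hcc
        push_neg at hcc
        exact hne (Prod.ext hcc.1 hcc.2)
      have hcase : n1 ≤ m.1 ∨ n2 ≤ m.2 := by omega
      rcases hcase with hc | hc
      · exact hA_J _ (wh_mem_pow01 hg hc)
      · exact hB_J _ (wh_mem_pow23 hg hc)
  exact ⟨hmain, hmain.trans himg⟩
end
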